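/- arXiv:2502.11670 — 9 statements merged into one kernel-verified Lean document; each statement's English description precedes it below -/
import Mathlib

section
/- Let $\mathit{\Gamma}$ be a digraph, let $H$ be a finite group acting on $\mathit{\Gamma}$ by automorphisms, and suppose $\mathit{\Gamma}$ is $H$-vertex-transitive, $H$-arc-transitive, and $(H,s)$-arc-transitive for some $s \geq 2$. Let $u \to v$ be an arc of $\mathit{\Gamma}$. Then $|H_u|^{s-1}$ divides $|H_{uv}|^{s}$. -/
/-- `Γ` is `(H,s)`-arc-transitive: `H` is transitive on the set of `s`-arcs. -/
def ArcTrans (H : Type*) {V : Type*} [Group H] [MulAction H V]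
    (r : V → V → Prop) (s : ℕ) : Prop :=
  ∀ a b : Fin (s + 1) → V, (∀ i : Fin s, r (a i.castSucc) (a i.succ)) →
    (∀ i : Fin s, r (b i.castSucc) (b i.succ)) → ∃ h : H, ∀ i, h • a i = b i

section Aux

variable {V : Type*} {r : V → V → Prop}

/-- An infinite forward `r`-chain starting at `w`. -/
noncomputable def chainFn (hout : ∀ w : V, ∃ x, r w x) (w : V) : ℕ → V
  | 0 => w
  | n + 1 => Classical.choose (hout (chainFn hout w n))

lemma chainFn_zero (hout : ∀ w : V, ∃ x, r w x) (w : V) : chainFn hout w 0 = w := rfl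

lemma chainFn_r (hout : ∀ w : V, ∃ x, r w x) (w : V) (n : ℕ) :
    r (chainFn hout w n) (chainFn hout w (n + 1)) :=
  Classical.choose_spec (hout (chainFn hout w n))

/-- Extend the prefix `p 0, …, p t` by `x` and then continue by a chain. -/
noncomputable def extFn (hout : ∀ w : V, ∃ x, r w x) (p : ℕ → V) (t : ℕ) (x : V) (n : ℕ) : V :=
  if n ≤ t then p n else chainFn hout x (n - (t + 1))

lemma extFn_le (hout : ∀ w : V, ∃ x, r w x) (p : ℕ → V) (t : ℕ) (x : V) (n : ℕ) (h : n ≤ t) :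
    extFn hout p t x n = p n := if_pos h

lemma extFn_succ_t (hout : ∀ w : V, ∃ x, r w x) (p : ℕ → V) (t : ℕ) (x : V) :
    extFn hout p t x (t + 1) = x := by
  unfold extFn
  rw [if_neg (by omega), Nat.sub_self, chainFn_zero]

lemma extFn_r (hout : ∀ w : V, ∃ x, r w x) (p : ℕ → V) (t : ℕ) (x : V)
    (hp : ∀ n, n + 1 ≤ t → r (p n) (p (n + 1))) (hx : r (p t) x) (n : ℕ) :
    r (extFn hout p t x n) (extFn hout p t x (n + 1)) := by
  unfold extFn
  rcases lt_trichotomy (n + 1) (t + 1) with h | h | h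
  · rw [if_pos (by omega), if_pos (by omega)]
    exact hp n (by omega)
  · have hnt : n = t := by omega
    subst hnt
    rw [if_pos (by omega), if_neg (by omega), Nat.sub_self, chainFn_zero]
    exact hx
  · rw [if_neg (by omega), if_neg (by omega)]
    have h1 : n + 1 - (t + 1) = n - (t + 1) + 1 := by omega
    rw [h1]
    exact chainFn_r hout x _

end Aux

/-- If a finite group `H` acts on a digraph `Γ` by automorphisms, `Γ` is
`H`-vertex-transitive, `H`-arc-transitive and `(H,s)`-arc-transitive with `s ≥ 2`,
and `u → v` is an arc, then `|H_u|^(s-1)` divides `|H_{uv}|^s`. -/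
theorem stabilizer_pow_dvd_of_arc_trans {V H : Type*} [Fintype V] [Group H] [Finite H]
    [MulAction H V] [FaithfulSMul H V]
    (r : V → V → Prop) (hirr : Irreflexive r) (hanti : ∀ u w, r u w → ¬ r w u)
    (hact : ∀ (h : H) (u w : V), r u w → r (h • u) (h • w))
    (hvt : ∀ u w : V, ∃ h : H, h • u = w)
    (s : ℕ) (hs : 2 ≤ s)
    (hat : ArcTrans H r 1) (hst : ArcTrans H r s)
    (u v : V) (huv : r u v) :
    Nat.card (MulAction.stabilizer H u) ^ (s - 1) ∣
      Nat.card (MulAction.stabilizer H u ⊓ MulAction.stabilizer H v : Subgroup H) ^ s := by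
  classical
  -- every vertex has an out-neighbour
  have hout : ∀ w : V, ∃ x, r w x := by
    intro w
    obtain ⟨h, hh⟩ := hvt u w
    exact ⟨h • v, hh ▸ hact h u v huv⟩
  -- an infinite forward chain starting with u, v
  set a : ℕ → V := extFn hout (fun _ => u) 0 v with ha_def
  have ha0 : a 0 = u := extFn_le hout _ 0 v 0 le_rfl
  have ha1 : a 1 = v := extFn_succ_t hout _ 0 v
  have har : ∀ n, r (a n) (a (n + 1)) :=
    extFn_r hout _ 0 v (fun n hn => absurd hn (by omega)) huv
  -- the stabilizer of the prefix of length t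
  set K : ℕ → Subgroup H := fun t => ⨅ i : Fin (t + 1), MulAction.stabilizer H (a i)
    with hK_def
  have hKmem : ∀ (t : ℕ) (g : H), g ∈ K t ↔ ∀ i ≤ t, g • a i = a i := by
    intro t g
    simp only [hK_def, Subgroup.mem_iInf, MulAction.mem_stabilizer_iff]
    constructor
    · intro hg i hi
      exact hg ⟨i, by omega⟩
    · intro hg i
      exact hg i (by omega)
  -- key: the stabilizer of a prefix is transitive on its extensions
  have key : ∀ t, t < s → ∀ x, r (a t) x →
      ∃ h : H, (∀ i ≤ t, h • a i = a i) ∧ h • a (t + 1) = x := by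
    intro t ht x hx
    have hbr : ∀ n, r (extFn hout a t x n) (extFn hout a t x (n + 1)) :=
      extFn_r hout a t x (fun n _ => har n) hx
    obtain ⟨h, hh⟩ := hst (fun i : Fin (s + 1) => a i)
      (fun i : Fin (s + 1) => extFn hout a t x i)
      (fun i => by simpa using har i) (fun i => by simpa using hbr i)
    refine ⟨h, fun i hi => ?_, ?_⟩
    · have h2 : h • a i = extFn hout a t x i := hh ⟨i, by omega⟩
      rwa [extFn_le hout a t x i hi] at h2
    · have h2 : h • a (t + 1) = extFn hout a t x (t + 1) := hh ⟨t + 1, by omega⟩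
      rwa [extFn_succ_t hout a t x] at h2
  -- the out-degree is constant
  set D := Nat.card {x // r u x} with hD_def
  have deg : ∀ w : V, Nat.card {x // r w x} = D := by
    intro w
    obtain ⟨h, hh⟩ := hvt u w
    rw [hD_def]
    apply Nat.card_congr
    exact
      { toFun := fun x => ⟨h⁻¹ • x.1, by
          have h3 : h⁻¹ • w = u := by rw [← hh, inv_smul_smul]
          have := hact h⁻¹ w x.1 x.2
          rwa [h3] at this⟩
        invFun := fun x => ⟨h • x.1, by
          have := hact h u x.1 x.2
          rwa [hh] at this⟩
        left_inv := fun x => Subtype.ext (by simp)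
        right_inv := fun x => Subtype.ext (by simp) }
  -- orbit-stabilizer step
  have step : ∀ t, t < s → Nat.card (K t) = D * Nat.card (K (t + 1)) := by
    intro t ht
    have horb : MulAction.orbit (K t) (a (t + 1)) = {x | r (a t) x} := by
      ext x
      constructor
      · rintro ⟨⟨k, hk⟩, rfl⟩
        have hfix : k • a t = a t := (hKmem t k).mp hk t le_rfl
        have h2 := hact k (a t) (a (t + 1)) (har t)
        rw [hfix] at h2
        exact h2
      · intro hx
        obtain ⟨h, hfix, hmap⟩ := key t ht x hx
        exact ⟨⟨h, (hKmem t h).mpr hfix⟩, hmap⟩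
    have hcard : Nat.card (MulAction.orbit (K t) (a (t + 1))) *
        Nat.card (MulAction.stabilizer (K t) (a (t + 1))) = Nat.card (K t) := by
      rw [← Nat.card_prod]
      exact Nat.card_congr (MulAction.orbitProdStabilizerEquivGroup (K t) (a (t + 1)))
    have horbcard : Nat.card (MulAction.orbit (K t) (a (t + 1))) = D := by
      rw [horb]
      exact deg (a t)
    have hstabcard : Nat.card (MulAction.stabilizer (K t) (a (t + 1))) =
        Nat.card (K (t + 1)) := by
      apply Nat.card_congr
      refine
        { toFun := fun g => ⟨((g : K t) : H), (hKmem (t + 1) _).mpr (fun i hi => ?_)⟩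
          invFun := fun g => ⟨⟨(g : H), (hKmem t _).mpr
              (fun i hi => (hKmem (t + 1) (g : H)).mp g.2 i (by omega))⟩,
            (hKmem (t + 1) (g : H)).mp g.2 (t + 1) le_rfl⟩
          left_inv := fun g => Subtype.ext (Subtype.ext rfl)
          right_inv := fun g => Subtype.ext rfl }
      rcases Nat.lt_or_ge i (t + 1) with h' | h'
      · exact (hKmem t _).mp (g : K t).2 i (by omega)
      · have : i = t + 1 := by omega
        subst this
        exact g.2
    rw [← hcard, horbcard, hstabcard]
  -- iterate the step
  have chain : ∀ m, m + 1 ≤ s → Nat.card (K 1) = D ^ m * Nat.card (K (m + 1)) := by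
    intro m
    induction m with
    | zero => intro _; simp
    | succ n ih =>
      intro hm
      rw [ih (by omega), step (n + 1) (by omega), pow_succ]
      ring
  have h1 : Nat.card (K 1) = D ^ (s - 1) * Nat.card (K s) := by
    have h2 := chain (s - 1) (by omega)
    rwa [show s - 1 + 1 = s by omega] at h2
  have h0 : Nat.card (K 0) = D * Nat.card (K 1) := step 0 (by omega)
  have hK0 : K 0 = MulAction.stabilizer H u := by
    ext g
    rw [hKmem 0 g, MulAction.mem_stabilizer_iff]
    constructor
    · intro hg
      have := hg 0 le_rfl
      rwa [ha0] at this
    · intro hg i hi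
      have : i = 0 := by omega
      subst this
      rw [ha0]
      exact hg
  have hK1 : K 1 = MulAction.stabilizer H u ⊓ MulAction.stabilizer H v := by
    ext g
    rw [hKmem 1 g, Subgroup.mem_inf, MulAction.mem_stabilizer_iff,
      MulAction.mem_stabilizer_iff]
    constructor
    · intro hg
      refine ⟨?_, ?_⟩
      · have := hg 0 (by omega); rwa [ha0] at this
      · have := hg 1 le_rfl; rwa [ha1] at this
    · rintro ⟨hgu, hgv⟩ i hi
      interval_cases i
      · rw [ha0]; exact hgu
      · rw [ha1]; exact hgv
  rw [← hK1, ← hK0, h0, mul_pow]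
  have hdvd : D ^ (s - 1) ∣ Nat.card (K 1) := ⟨Nat.card (K s), h1⟩
  calc D ^ (s - 1) * Nat.card (K 1) ^ (s - 1)
      ∣ Nat.card (K 1) * Nat.card (K 1) ^ (s - 1) := mul_dvd_mul hdvd dvd_rfl
    _ = Nat.card (K 1) ^ s := by rw [← pow_succ']; congr 1; omega
end

section
/- Let $\mathit{\Gamma}$ be a connected digraph with at least one arc, let $H$ be a finite group acting on $\mathit{\Gamma}$ by automorphisms, and suppose $\mathit{\Gamma}$ is $H$-vertex-transitive and $(H,k)$-arc-transitive for every $k$ with $1 \leq k \leq s$, where $s \geq 2$. Let $L$ be a normal subgroup of $H$ that is transitive on the vertex set, let $v$ be a vertex, and suppose $L_v$ has a normal subgroup $A$ isomorphic to $\mathrm{C}_m \times \mathrm{C}_m$ for some integer $m \geq 2$. If there exists a prime divisor $r$ of $m$ such that $r$ does not divide the index $[L_v : A]$ and $v_r(|H|/|L|) < v_r(m)$ (where $v_r$ denotes the $r$-adic valuation), then $s \leq 2$. -/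
open Subgroup MulAction

local notation "C₂" m => Multiplicative (ZMod m) × Multiplicative (ZMod m)

namespace ZMod

theorem nsmul_eq_zero_iff_mem_zmultiples {m n : ℕ} [NeZero m] (hnm : n ∣ m) {u : ZMod m} :
    n • u = 0 ↔ u ∈ AddSubgroup.zmultiples ((m / n : ℕ) : ZMod m) := by
  obtain ⟨c, rfl⟩ := hnm
  have hn : 0 < n := Nat.pos_of_ne_zero (left_ne_zero_of_mul (NeZero.ne (n * c)))
  rw [Nat.mul_div_cancel_left _ hn]
  constructor
  · intro h
    have hdvd : n * c ∣ n * u.val := by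
      rw [← ZMod.natCast_eq_zero_iff, Nat.cast_mul, natCast_zmod_val, ← nsmul_eq_mul, h]
    obtain ⟨t, ht⟩ := (Nat.mul_dvd_mul_iff_left hn).1 hdvd
    refine ⟨t, ?_⟩
    dsimp only
    rw [natCast_zsmul, nsmul_eq_mul, ← Nat.cast_mul, mul_comm t, ← ht, natCast_zmod_val]
  · rintro ⟨k, rfl⟩
    rw [smul_comm, nsmul_eq_mul, ← Nat.cast_mul, natCast_self, zsmul_zero]

theorem card_nsmul_eq_zero_of_dvd {m n : ℕ} [NeZero m] (hnm : n ∣ m) :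
    Nat.card {u : ZMod m // n • u = 0} = n := by
  rw [Nat.card_congr (Equiv.subtypeEquivRight fun u => nsmul_eq_zero_iff_mem_zmultiples hnm),
    Nat.card_zmultiples, addOrderOf_coe _ (NeZero.ne m)]
  obtain ⟨c, rfl⟩ := hnm
  have hn : 0 < n := Nat.pos_of_ne_zero (left_ne_zero_of_mul (NeZero.ne (n * c)))
  have hc : 0 < c := Nat.pos_of_ne_zero (right_ne_zero_of_mul (NeZero.ne (n * c)))
  rw [Nat.mul_div_cancel_left _ hn, Nat.gcd_mul_left_left, Nat.mul_div_cancel _ hc]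

theorem exists_nsmul_eq_of_nsmul_eq_zero {m k n : ℕ} [NeZero m] (hknm : k * n ∣ m) {u : ZMod m}
    (hu : n • u = 0) : ∃ w : ZMod m, (k * n) • w = 0 ∧ k • w = u := by
  obtain ⟨t, rfl⟩ := (nsmul_eq_zero_iff_mem_zmultiples (dvd_of_mul_left_dvd hknm)).1 hu
  obtain ⟨c, rfl⟩ := hknm
  have hn : 0 < n :=
    Nat.pos_of_ne_zero (right_ne_zero_of_mul (left_ne_zero_of_mul (NeZero.ne (k * n * c))))
  refine ⟨t • (c : ZMod (k * n * c)), ?_, ?_⟩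
  · rw [smul_comm, nsmul_eq_mul, ← Nat.cast_mul, natCast_self, zsmul_zero]
  · rw [smul_comm, nsmul_eq_mul, ← Nat.cast_mul, show k * n * c = n * (k * c) by ring,
      Nat.mul_div_cancel_left _ hn]

theorem card_pow_eq_one_multiplicative_prod {m n : ℕ} [NeZero m] (hnm : n ∣ m) :
    Nat.card {z : C₂ m // z ^ n = 1} = n ^ 2 := by
  have hC : Nat.card {u : Multiplicative (ZMod m) // u ^ n = 1} = n := by
    refine (Nat.card_congr (Multiplicative.toAdd.subtypeEquiv fun u => ?_)).trans
      (card_nsmul_eq_zero_of_dvd hnm)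
    rw [← toAdd_pow, ← toAdd_one, Multiplicative.toAdd.injective.eq_iff]
  rw [Nat.card_congr ((Equiv.subtypeEquivRight fun z => Prod.ext_iff).trans
    (Equiv.subtypeProdEquivProd (p := fun u => u ^ n = 1) (q := fun u => u ^ n = 1))),
    Nat.card_prod, hC, sq]

theorem exists_pow_eq_multiplicative_prod {m k n : ℕ} [NeZero m] (hknm : k * n ∣ m) {z : C₂ m}
    (hz : z ^ n = 1) : ∃ w : C₂ m, w ^ (k * n) = 1 ∧ w ^ k = z := by
  have hC : ∀ u : Multiplicative (ZMod m), u ^ n = 1 →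
      ∃ w : Multiplicative (ZMod m), w ^ (k * n) = 1 ∧ w ^ k = u := fun u hu => by
    obtain ⟨w, hw, hwu⟩ := exists_nsmul_eq_of_nsmul_eq_zero hknm (u := u.toAdd)
      (by rw [← toAdd_pow, hu, toAdd_one])
    exact ⟨.ofAdd w, by rw [← ofAdd_nsmul, hw, ofAdd_zero], by rw [← ofAdd_nsmul, hwu, ofAdd_toAdd]⟩
  obtain ⟨w₁, hw₁, hwz₁⟩ := hC z.1 (by rw [← Prod.pow_fst, hz, Prod.fst_one])
  obtain ⟨w₂, hw₂, hwz₂⟩ := hC z.2 (by rw [← Prod.pow_snd, hz, Prod.snd_one])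
  exact ⟨(w₁, w₂), Prod.ext hw₁ hw₂, Prod.ext hwz₁ hwz₂⟩

end ZMod

namespace Subgroup

variable {G : Type*} [Group G]

theorem card_mul_relIndex {H K : Subgroup G} (h : H ≤ K) :
    Nat.card H * H.relIndex K = Nat.card K := by
  rw [← relIndex_bot_left, ← relIndex_bot_left, relIndex_mul_relIndex _ _ _ bot_le h]

theorem relIndex_dvd_relIndex_of_le (L : Subgroup G) [L.Normal] {K K' : Subgroup G} (h : K ≤ K') :
    L.relIndex K ∣ L.relIndex K' := by
  rw [← QuotientGroup.ker_mk' L, relIndex_ker, relIndex_ker]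
  exact card_dvd_of_le (map_mono h)

theorem le_of_isPGroup_of_card_eq {p : ℕ} [Fact p.Prime] [Finite G] {K R P : Subgroup G}
    (hRK : R ≤ K)
    (hKR : K ≤ normalizer (R : Set G)) (hR : Nat.card R = p ^ (Nat.card K).factorization p)
    (hPK : P ≤ K) (hP : IsPGroup p P) : P ≤ R := by
  have : (R.subgroupOf K).Normal := (normal_subgroupOf_iff_le_normalizer hRK).2 hKR
  let S := Sylow.ofCard (R.subgroupOf K)
    (by rw [← hR]; exact Nat.card_congr (subgroupOfEquivOfLe hRK).toEquiv)
  have := Sylow.unique_of_normal S this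
  obtain ⟨Q, hQ⟩ := (hP.comap_subtype (K := K)).exists_le_sylow
  rw [Subsingleton.elim Q S] at hQ
  exact fun y hy => hQ (x := ⟨y, hPK hy⟩) hy

theorem factorization_card_eq_of_not_dvd_relIndex {p m : ℕ} [NeZero m] {A K : Subgroup G}
    (e : A ≃* C₂ m) (hAK : A ≤ K) (hpK : ¬p ∣ A.relIndex K) :
    (Nat.card K).factorization p = 2 * m.factorization p := by
  have hA : Nat.card A = m ^ 2 := by
    rw [Nat.card_congr e.toEquiv, Nat.card_prod, Nat.card_congr Multiplicative.toAdd,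
      Nat.card_zmod, sq]
  have hidx : A.relIndex K ≠ 0 := fun h => hpK (h ▸ dvd_zero p)
  rw [← card_mul_relIndex hAK, hA, Nat.factorization_mul (pow_ne_zero 2 (NeZero.ne m)) hidx,
    Nat.factorization_pow, Finsupp.add_apply, Finsupp.smul_apply,
    Nat.factorization_eq_zero_of_not_dvd hpK, smul_eq_mul, add_zero]

variable (A : Subgroup G) [IsMulCommutative A] (n : ℕ)

/-- `Ω_n(A)`. -/
def torsionBy : Subgroup G where
  carrier := {x | x ∈ A ∧ x ^ n = 1}
  one_mem' := ⟨A.one_mem, one_pow n⟩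
  mul_mem' := fun {x y} ⟨hx, hxn⟩ ⟨hy, hyn⟩ =>
    ⟨A.mul_mem hx hy, by rw [(Commute.mul_pow (setLike_mul_comm hx hy)), hxn, hyn, one_mul]⟩
  inv_mem' := fun {x} ⟨hx, hxn⟩ => ⟨A.inv_mem hx, by rw [inv_pow, hxn, inv_one]⟩

variable {A n}

theorem mem_torsionBy {x : G} : x ∈ A.torsionBy n ↔ x ∈ A ∧ x ^ n = 1 := Iff.rfl

theorem torsionBy_le : A.torsionBy n ≤ A := fun _ hx => hx.1

instance : IsMulCommutative (A.torsionBy n) :=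
  .of_setLike_mul_comm fun _ ha _ hb => setLike_mul_comm (torsionBy_le ha) (torsionBy_le hb)

theorem torsionBy_torsionBy_of_dvd {k : ℕ} (hkn : k ∣ n) :
    (A.torsionBy n).torsionBy k = A.torsionBy k := by
  ext x
  simp only [mem_torsionBy, and_assoc, and_congr_right_iff, and_iff_right_iff_imp]
  rintro - hx
  obtain ⟨c, rfl⟩ := hkn
  rw [pow_mul, hx, one_pow]

theorem normalizer_le_normalizer_torsionBy :
    normalizer (A : Set G) ≤ normalizer (A.torsionBy n : Set G) := fun g hg =>
  mem_normalizer_iff.2 fun x => by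
    rw [mem_torsionBy, mem_torsionBy, ← mem_normalizer_iff.1 hg x, conj_pow, mul_inv_eq_one,
      mul_eq_left]

theorem card_torsionBy {m : ℕ} [NeZero m] (e : A ≃* C₂ m) (hnm : n ∣ m) :
    Nat.card (A.torsionBy n) = n ^ 2 := by
  have hA : A.torsionBy n ≃ {a : A // a ^ n = 1} :=
    (Equiv.subtypeSubtypeEquivSubtypeInter (· ∈ A) (· ^ n = 1)).symm.trans
      (Equiv.subtypeEquivRight fun a => by rw [← coe_pow, OneMemClass.coe_eq_one])
  rw [Nat.card_congr (hA.trans (e.toEquiv.subtypeEquiv (q := (· ^ n = 1)) fun a => by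
    rw [← e.map_eq_one_iff, map_pow]; rfl)),
    ZMod.card_pow_eq_one_multiplicative_prod hnm]

theorem exists_pow_eq_of_mem_torsionBy {m k : ℕ} [NeZero m] (e : A ≃* C₂ m) (hknm : k * n ∣ m)
    {x : G} (hx : x ∈ A.torsionBy n) : ∃ y ∈ A.torsionBy (k * n), y ^ k = x := by
  obtain ⟨w, hw, hwx⟩ := ZMod.exists_pow_eq_multiplicative_prod hknm (z := e ⟨x, hx.1⟩)
    (by rw [← map_pow, e.map_eq_one_iff]; exact Subtype.ext hx.2)
  refine ⟨e.symm w, ⟨(e.symm w).2, ?_⟩, ?_⟩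
  · rw [← coe_pow, ← map_pow, hw, map_one, coe_one]
  · rw [← coe_pow, ← map_pow, hwx, e.symm_apply_apply]

/-- In `R ≅ C_{p^a}²`, a subgroup `P` of order `> p^a` has index dividing `p^(a-1)`, so it
contains `R^(p^(a-1))`, which is all of `Ω_p(R)`. -/
theorem torsionBy_le_of_lt_card [Finite G] {p m a : ℕ} [Fact p.Prime] [NeZero m] (e : A ≃* C₂ m)
    (hpa : p ^ a ∣ m) {P : Subgroup G} (hPR : P ≤ A.torsionBy (p ^ a))
    (hP : p ^ a < Nat.card P) : A.torsionBy p ≤ P := by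
  have hp := (Fact.out : p.Prime)
  have hmul : Nat.card P * P.relIndex (A.torsionBy (p ^ a)) = p ^ (a + a) := by
    rw [card_mul_relIndex hPR, card_torsionBy e hpa, ← pow_mul, mul_two]
  obtain ⟨i, -, hi⟩ := (Nat.dvd_prime_pow hp).1 (Dvd.intro_left _ hmul)
  have hia : a + i < a + a := by
    rw [← Nat.pow_lt_pow_iff_right hp.one_lt, ← hmul, hi, pow_add]
    exact Nat.mul_lt_mul_of_pos_right hP (pow_pos hp.pos i)
  intro x hx
  obtain ⟨y, hy, rfl⟩ := exists_pow_eq_of_mem_torsionBy (k := p ^ (a - 1)) e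
    (by rwa [← pow_succ, Nat.sub_add_cancel (by omega)]) hx
  rw [← pow_succ, Nat.sub_add_cancel (by omega)] at hy
  have hyP : y ^ p ^ i ∈ P := by
    have := pow_index_mem (P.subgroupOf (A.torsionBy (p ^ a))) ⟨y, hy⟩
    rwa [← relIndex, hi, mem_subgroupOf, coe_pow] at this
  rw [show a - 1 = i + (a - 1 - i) by omega, pow_add, pow_mul]
  exact P.pow_mem hyP _

end Subgroup

theorem MulAction.relIndex_stabilizer {G X : Type*} [Group G] [MulAction G X] (K : Subgroup G)
    (x : X) : (stabilizer G x).relIndex K = (orbit K x).ncard :=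
  index_stabilizer K x

section Digraph

variable {H V : Type*} [Group H] [MulAction H V] {r : V → V → Prop}

theorem ArcTrans.exists_smul_eq_of_rel (h : ArcTrans H r 1) {u w u' w' : V} (huw : r u w)
    (huw' : r u' w') : ∃ g : H, g • u = u' ∧ g • w = w' := by
  obtain ⟨g, hg⟩ := h ![u, w] ![u', w'] (fun i => by fin_cases i; exact huw)
    (fun i => by fin_cases i; exact huw')
  exact ⟨g, hg 0, hg 1⟩

theorem exists_rel_of_transitive (hact : ∀ (h : H) (u w : V), r u w → r (h • u) (h • w))
    (hvt : ∀ u w : V, ∃ h : H, h • u = w) (harc : ∃ u w : V, r u w) (u : V) : ∃ w, r u w := by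
  obtain ⟨u₀, w₀, h₀⟩ := harc
  obtain ⟨g, rfl⟩ := hvt u₀ u
  exact ⟨g • w₀, hact g _ _ h₀⟩

theorem exists_walk (h : ∀ u : V, ∃ w, r u w) (v : V) :
    ∃ x : ℕ → V, x 0 = v ∧ ∀ i, r (x i) (x (i + 1)) := by
  choose f hf using h
  exact ⟨fun n => f^[n] v, rfl, fun i => by
    simp only [Function.iterate_succ_apply']; exact hf _⟩

theorem ncard_rel_smul (hact : ∀ (h : H) (u w : V), r u w → r (h • u) (h • w)) (g : H) (x : V) :
    {y | r (g • x) y}.ncard = {y | r x y}.ncard := by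
  have : {y | r (g • x) y} = (g • ·) '' {y | r x y} := by
    ext y
    refine ⟨fun hy => ⟨g⁻¹ • y, by simpa using hact g⁻¹ _ _ hy, smul_inv_smul g y⟩, ?_⟩
    rintro ⟨z, hz, rfl⟩
    exact hact g x z hz
  rw [this, Set.ncard_image_of_injective _ (MulAction.injective g)]

theorem exists_mem_smul_eq_of_stabilizer_le (hconn : (SimpleGraph.fromRel r).Connected)
    (h1 : ArcTrans H r 1) {v w : V} (hvw : r v w) {g : H} (hg : g • v = w) {K : Subgroup H}
    (hvK : stabilizer H v ≤ K) (hgK : g ∈ K) (x : V) : ∃ k ∈ K, k • v = x := by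
  have hstab : ∀ {k k' : H}, k • v = k' • v → k ∈ K → k' ∈ K := fun {k k'} hkk' hk => by
    have : k⁻¹ * k' ∈ K := hvK (by rw [mem_stabilizer_iff, mul_smul, ← hkk', inv_smul_smul])
    simpa using K.mul_mem hk this
  induction (SimpleGraph.reachable_iff_reflTransGen v x).1 (hconn.preconnected v x) with
  | refl => exact ⟨1, K.one_mem, one_smul H v⟩
  | tail _ hyz ih =>
    obtain ⟨k, hk, rfl⟩ := ih
    rcases ((SimpleGraph.fromRel_adj _ _ _).1 hyz).2 with hyz | hzy
    · obtain ⟨k', hk'v, hk'w⟩ := h1.exists_smul_eq_of_rel hvw hyz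
      exact ⟨k' * g, K.mul_mem (hstab hk'v.symm hk) hgK, by rw [mul_smul, hg, hk'w]⟩
    · obtain ⟨k', hk'v, hk'w⟩ := h1.exists_smul_eq_of_rel hvw hzy
      have hk'g : k' * g ∈ K := hstab (by rw [mul_smul, hg, hk'w]) hk
      exact ⟨k', by simpa using K.mul_mem hk'g (K.inv_mem hgK), hk'v⟩

theorem eq_bot_of_le_stabilizer [FaithfulSMul H V] {W : Subgroup H} {v : V}
    (hWv : W ≤ stabilizer H v) (htrans : ∀ x, ∃ k ∈ normalizer (W : Set H), k • v = x) :
    W = ⊥ := by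
  refine (eq_bot_iff_forall W).2 fun w hw => eq_of_smul_eq_smul (α := V) fun x => ?_
  obtain ⟨k, hk, rfl⟩ := htrans x
  have : (k⁻¹ * w * k) • v = v := hWv ((mem_normalizer_iff''.1 hk w).1 hw)
  rwa [one_smul, ← inv_smul_eq_iff, ← mul_smul, ← mul_smul]

variable (H) in
/-- `H_{x₀ x₁ … x_k}`. -/
def walkStabilizer (x : ℕ → V) : ℕ → Subgroup H
  | 0 => stabilizer H (x 0)
  | k + 1 => walkStabilizer x k ⊓ stabilizer H (x (k + 1))

theorem mem_walkStabilizer {x : ℕ → V} {k : ℕ} {g : H} :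
    g ∈ walkStabilizer H x k ↔ ∀ i ≤ k, g • x i = x i := by
  induction k with
  | zero => simp [walkStabilizer]
  | succ k ih =>
    simp only [walkStabilizer, mem_inf, ih, mem_stabilizer_iff, Nat.le_succ_iff, or_imp,
      forall_and, forall_eq]

theorem orbit_walkStabilizer (hact : ∀ (h : H) (u w : V), r u w → r (h • u) (h • w))
    {x : ℕ → V} (hx : ∀ i, r (x i) (x (i + 1))) {k : ℕ} (hk : ArcTrans H r (k + 1)) :
    orbit (walkStabilizer H x k) (x (k + 1)) = {y | r (x k) y} := by
  ext y
  constructor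
  · rintro ⟨⟨g, hg⟩, rfl⟩
    have := hact g _ _ (hx k)
    rwa [mem_walkStabilizer.1 hg k le_rfl] at this
  · intro hy
    obtain ⟨g, hg⟩ := hk (fun i => x i) (fun i => if (i : ℕ) = k + 1 then y else x i)
      (fun i => hx i) (fun i => by
        have hi : (i : ℕ) ≠ k + 1 := by omega
        by_cases hik : (i : ℕ) = k
        · simpa [hik] using hy
        · simpa [hi, hik] using hx i)
    refine ⟨⟨g, mem_walkStabilizer.2 fun i hi => ?_⟩, ?_⟩
    · simpa [show i ≠ k + 1 by omega] using hg ⟨i, by omega⟩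
    · simpa using hg (Fin.last (k + 1))

theorem relIndex_walkStabilizer (hact : ∀ (h : H) (u w : V), r u w → r (h • u) (h • w))
    {x : ℕ → V} (hx : ∀ i, r (x i) (x (i + 1))) {k : ℕ} (hk : ArcTrans H r (k + 1)) :
    (walkStabilizer H x (k + 1)).relIndex (walkStabilizer H x k) = {y | r (x k) y}.ncard := by
  rw [walkStabilizer, inf_relIndex_left, relIndex_stabilizer, orbit_walkStabilizer hact hx hk]

theorem card_walkStabilizer_sq_dvd [Finite H]
    (hact : ∀ (h : H) (u w : V), r u w → r (h • u) (h • w))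
    (hvt : ∀ u w : V, ∃ h : H, h • u = w) {x : ℕ → V} (hx : ∀ i, r (x i) (x (i + 1)))
    (h1 : ArcTrans H r 1) (h2 : ArcTrans H r 2) (h3 : ArcTrans H r 3) :
    Nat.card (walkStabilizer H x 0) ^ 2 ∣ Nat.card (walkStabilizer H x 1) ^ 3 := by
  have hcard : ∀ k, ArcTrans H r (k + 1) → Nat.card (walkStabilizer H x k) =
      Nat.card (walkStabilizer H x (k + 1)) * {y | r (x 0) y}.ncard := fun k hk => by
    obtain ⟨g, hg⟩ := hvt (x 0) (x k)
    rw [← card_mul_relIndex inf_le_left, ← walkStabilizer, relIndex_walkStabilizer hact hx hk,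
      ← hg, ncard_rel_smul hact]
  rw [hcard 0 h1, hcard 1 h2, hcard 2 h3]
  exact ⟨Nat.card (walkStabilizer H x 3), by ring⟩

end Digraph

section NormalSylow

variable {H V : Type*} [Group H] [MulAction H V] {L : Subgroup H} [L.Normal] {p : ℕ}

theorem conj_mem_inf_stabilizer {v : V} {k y : H} (hy : y ∈ L ⊓ stabilizer H v) :
    k * y * k⁻¹ ∈ L ⊓ stabilizer H (k • v) :=
  mem_inf.2 ⟨‹L.Normal›.conj_mem y (mem_inf.1 hy).1 k, by
    rw [mem_stabilizer_iff, mul_smul, mul_smul, inv_smul_smul,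
      mem_stabilizer_iff.1 (mem_inf.1 hy).2]⟩

variable [Finite H]

theorem stabilizer_le_normalizer_of_isPGroup {v : V} {R : Subgroup H}
    (hRv : R ≤ L ⊓ stabilizer H v) (hRp : IsPGroup p R)
    (hR : ∀ y ∈ L ⊓ stabilizer H v, (∃ n, y ^ p ^ n = 1) → y ∈ R) :
    stabilizer H v ≤ normalizer (R : Set H) := fun k hk =>
  mem_normalizer_fintype fun y hy => by
    obtain ⟨n, hn⟩ := hRp ⟨y, hy⟩
    refine hR _ ?_ ⟨n, ?_⟩
    · simpa [mem_stabilizer_iff.1 hk] using conj_mem_inf_stabilizer (k := k) (hRv hy)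
    · rw [conj_pow, show y ^ p ^ n = 1 from congrArg Subtype.val hn, mul_one, mul_inv_cancel]

theorem mem_normalizer_torsionBy_of_le_stabilizer {v : V} {R : Subgroup H} [IsMulCommutative R]
    (hRL : R ≤ L)
    (hR : ∀ y ∈ L ⊓ stabilizer H v, (∃ n, y ^ p ^ n = 1) → y ∈ R) {g : H}
    (hW : R.torsionBy p ≤ stabilizer H (g • v)) : g ∈ normalizer (R.torsionBy p : Set H) := by
  refine inv_mem_iff.1 (mem_normalizer_fintype fun y hy => ?_)
  have hy' : g⁻¹ * y * g⁻¹⁻¹ ∈ L ⊓ stabilizer H v := by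
    simpa using conj_mem_inf_stabilizer (k := g⁻¹) ⟨hRL (torsionBy_le hy), hW hy⟩
  have hp : (g⁻¹ * y * g⁻¹⁻¹) ^ p = 1 := by rw [conj_pow, hy.2, mul_one, mul_inv_cancel]
  exact ⟨hR _ hy' ⟨1, by rwa [pow_one]⟩, hp⟩

theorem mem_torsionBy_of_pow_eq_one [Fact p.Prime] {A K : Subgroup H} [IsMulCommutative A] {m : ℕ}
    [NeZero m] (e : A ≃* C₂ m) (hAK : A ≤ K) (hAn : (A.subgroupOf K).Normal)
    (hpK : ¬p ∣ A.relIndex K) {y : H} (hyK : y ∈ K) (hy : ∃ n, y ^ p ^ n = 1) :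
    y ∈ A.torsionBy (p ^ m.factorization p) := by
  obtain ⟨n, hn⟩ := hy
  refine le_of_isPGroup_of_card_eq (torsionBy_le.trans hAK)
    (((normal_subgroupOf_iff_le_normalizer hAK).1 hAn).trans normalizer_le_normalizer_torsionBy)
    (by rw [card_torsionBy e (Nat.ordProj_dvd m p), ← pow_mul,
      factorization_card_eq_of_not_dvd_relIndex e hAK hpK, mul_comm])
    (zpowers_le.2 hyK) (IsPGroup.of_card_dvd_pow (n := n) ?_) (mem_zpowers y)
  rw [Nat.card_zpowers]
  exact orderOf_dvd_of_pow_eq_one hn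

end NormalSylow

theorem factorization_card_le_of_le_stabilizer {H V : Type*} [Group H] [Finite H] [MulAction H V]
    [FaithfulSMul H V] {r : V → V → Prop} (hconn : (SimpleGraph.fromRel r).Connected)
    (h1 : ArcTrans H r 1) {v w : V} (hvw : r v w) {g : H} (hg : g • v = w) {L : Subgroup H}
    [L.Normal] {p m a : ℕ} [Fact p.Prime] [NeZero m] (ha : 0 < a) (hpa : p ^ a ∣ m)
    {A : Subgroup H} [IsMulCommutative A] (e : A ≃* C₂ m) (hAv : A ≤ L ⊓ stabilizer H v)
    (hR : ∀ y ∈ L ⊓ stabilizer H v, (∃ n, y ^ p ^ n = 1) → y ∈ A.torsionBy (p ^ a))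
    {K : Subgroup H} (hK : K ≤ L ⊓ stabilizer H v ⊓ stabilizer H w) :
    (Nat.card K).factorization p ≤ a := by
  have hp := (Fact.out : p.Prime)
  by_contra! hKa
  obtain ⟨Q, hQ⟩ := Sylow.exists_subgroup_card_pow_prime (G := K) p (n := a + 1)
    ((hp.pow_dvd_iff_le_factorization Nat.card_pos.ne').2 hKa)
  have hPK : Q.map K.subtype ≤ K := map_subtype_le Q
  have hPcard : Nat.card (Q.map K.subtype) = p ^ (a + 1) := by
    rw [card_map_of_injective K.subtype_injective, hQ]
  have hPR : Q.map K.subtype ≤ A.torsionBy (p ^ a) := fun y hy =>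
    hR y (mem_inf.1 (hK (hPK hy))).1 ((IsPGroup.of_card hPcard ⟨y, hy⟩).imp fun _ hn =>
      congrArg Subtype.val hn)
  have hWP := torsionBy_le_of_lt_card e hpa hPR
    (hPcard ▸ Nat.pow_lt_pow_right hp.one_lt a.lt_succ_self)
  rw [← torsionBy_torsionBy_of_dvd (dvd_pow_self p ha.ne')] at hWP
  have hRv : A.torsionBy (p ^ a) ≤ L ⊓ stabilizer H v := torsionBy_le.trans hAv
  have hvW := (stabilizer_le_normalizer_of_isPGroup hRv (fun x => ⟨a, Subtype.ext x.2.2⟩) hR).trans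
    (normalizer_le_normalizer_torsionBy (n := p))
  have hgW := mem_normalizer_torsionBy_of_le_stabilizer (hRv.trans inf_le_left) hR
    (hg ▸ hWP.trans (hPK.trans (hK.trans inf_le_right)))
  have hW := eq_bot_of_le_stabilizer (torsionBy_le.trans (hRv.trans inf_le_right))
    (exists_mem_smul_eq_of_stabilizer_le hconn h1 hvw hg hvW hgW)
  have hWcard := card_torsionBy (n := p) e ((dvd_pow_self p ha.ne').trans hpa)
  rw [← torsionBy_torsionBy_of_dvd (dvd_pow_self p ha.ne'), hW, card_bot] at hWcard
  exact absurd hWcard.symm (Nat.one_lt_pow two_ne_zero hp.one_lt).ne'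

theorem le_factorization_index_of_sq_dvd_cube {G : Type*} [Group G] [Finite G] {L : Subgroup G}
    [L.Normal] {K₀ K₁ : Subgroup G} (hK : K₁ ≤ K₀) (hdvd : Nat.card K₀ ^ 2 ∣ Nat.card K₁ ^ 3)
    {p a : ℕ} [Fact p.Prime] (h₀ : (Nat.card (K₀ ⊓ L : Subgroup G)).factorization p = 2 * a)
    (h₁ : (Nat.card (K₁ ⊓ L : Subgroup G)).factorization p ≤ a) :
    a ≤ L.index.factorization p := by
  have hv : ∀ {x y : ℕ}, x ∣ y → y ≠ 0 → x.factorization p ≤ y.factorization p := fun h hy =>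
    (Nat.factorization_le_iff_dvd (ne_zero_of_dvd_ne_zero hy h) hy).2 h p
  have hsplit : ∀ K : Subgroup G, (Nat.card K).factorization p =
      (Nat.card (K ⊓ L : Subgroup G)).factorization p + (L.relIndex K).factorization p := by
    intro K
    have h := card_mul_relIndex (inf_le_left : K ⊓ L ≤ K)
    rw [inf_relIndex_left] at h
    rw [← h, Nat.factorization_mul (left_ne_zero_of_mul (h ▸ Nat.card_pos.ne'))
      (right_ne_zero_of_mul (h ▸ Nat.card_pos.ne')), Finsupp.add_apply]
  have hpow := hv hdvd (pow_ne_zero 3 Nat.card_pos.ne')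
  simp only [Nat.factorization_pow, Finsupp.smul_apply, smul_eq_mul] at hpow
  rw [hsplit K₀, hsplit K₁] at hpow
  have hi₀ := hv (relIndex_dvd_index_of_normal L K₀) index_ne_zero_of_finite
  have hi₁ := hv (relIndex_dvd_relIndex_of_le L hK)
    (ne_zero_of_dvd_ne_zero index_ne_zero_of_finite (relIndex_dvd_index_of_normal L K₀))
  omega

theorem s_le_two_of_normal_Cm_sq_general {V H : Type*} [Group H] [Finite H]
    [MulAction H V] [FaithfulSMul H V]
    (r : V → V → Prop)
    (hact : ∀ (h : H) (u w : V), r u w → r (h • u) (h • w))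
    (hconn : (SimpleGraph.fromRel r).Connected)
    (harc : ∃ u w : V, r u w)
    (hvt : ∀ u w : V, ∃ h : H, h • u = w)
    (s : ℕ)
    (hkt : ∀ k, 1 ≤ k → k ≤ s → ArcTrans H r k)
    (L : Subgroup H) (hLnorm : L.Normal)
    (v : V) (m : ℕ)
    (A : Subgroup H) (hAle : A ≤ L ⊓ MulAction.stabilizer H v)
    (hAnorm : (A.subgroupOf (L ⊓ MulAction.stabilizer H v)).Normal)
    (hAiso : Nonempty (A ≃* Multiplicative (ZMod m) × Multiplicative (ZMod m)))
    (p : ℕ) (hp : p.Prime)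
    (hpidx : ¬ p ∣ A.relIndex (L ⊓ MulAction.stabilizer H v))
    (hpval : (L.index).factorization p < m.factorization p) :
    s ≤ 2 := by
  by_contra! hs3
  have := Fact.mk hp
  have : NeZero m := ⟨by rintro rfl; simp at hpval⟩
  obtain ⟨e⟩ := hAiso
  have : IsMulCommutative A :=
    isMulCommutative_iff.2 fun x y => e.injective (by rw [map_mul, map_mul, mul_comm])
  obtain ⟨x, rfl, hx⟩ := exists_walk (exists_rel_of_transitive hact hvt harc) v
  obtain ⟨g, hg⟩ := hvt (x 0) (x 1)
  have h₀ : (Nat.card (walkStabilizer H x 0 ⊓ L : Subgroup H)).factorization p =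
      2 * m.factorization p := by
    rw [walkStabilizer, inf_comm]
    exact factorization_card_eq_of_not_dvd_relIndex e hAle hpidx
  have h₁ := factorization_card_le_of_le_stabilizer hconn (hkt 1 le_rfl (by omega)) (hx 0) hg
    (by omega) (Nat.ordProj_dvd m p) e hAle
    (fun y hy => mem_torsionBy_of_pow_eq_one e hAle hAnorm hpidx hy)
    (K := walkStabilizer H x 1 ⊓ L) fun y ⟨⟨hy₀, hy₁⟩, hyL⟩ => ⟨⟨hyL, hy₀⟩, hy₁⟩
  exact hpval.not_ge (le_factorization_index_of_sq_dvd_cube inf_le_left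
    (card_walkStabilizer_sq_dvd hact hvt hx (hkt 1 le_rfl (by omega))
      (hkt 2 (by omega) (by omega)) (hkt 3 (by omega) hs3)) h₀ h₁)

/-- If `L ⊴ H` is vertex-transitive, `L_v` has a normal subgroup `A ≅ C_m × C_m`, and
there is a prime `r` dividing `m` with `r ∤ [L_v : A]` and `v_r(|H|/|L|) < v_r(m)`,
then `s ≤ 2`. -/
theorem s_le_two_of_normal_Cm_sq {V H : Type*} [Fintype V] [Group H] [Finite H]
    [MulAction H V] [FaithfulSMul H V]
    (r : V → V → Prop) (hirr : Irreflexive r) (hanti : ∀ u w, r u w → ¬ r w u)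
    (hact : ∀ (h : H) (u w : V), r u w → r (h • u) (h • w))
    (hconn : (SimpleGraph.fromRel r).Connected)
    (harc : ∃ u w : V, r u w)
    (hvt : ∀ u w : V, ∃ h : H, h • u = w)
    (s : ℕ) (hs : 2 ≤ s)
    (hkt : ∀ k, 1 ≤ k → k ≤ s → ArcTrans H r k)
    (L : Subgroup H) (hLnorm : L.Normal)
    (hLtrans : ∀ u w : V, ∃ g ∈ L, g • u = w)
    (v : V) (m : ℕ) (hm : 2 ≤ m)
    (A : Subgroup H) (hAle : A ≤ L ⊓ MulAction.stabilizer H v)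
    (hAnorm : (A.subgroupOf (L ⊓ MulAction.stabilizer H v)).Normal)
    (hAiso : Nonempty (A ≃* Multiplicative (ZMod m) × Multiplicative (ZMod m)))
    (p : ℕ) (hp : p.Prime) (hpm : p ∣ m)
    (hpidx : ¬ p ∣ A.relIndex (L ⊓ MulAction.stabilizer H v))
    (hpval : (L.index).factorization p < m.factorization p) :
    s ≤ 2 :=
  s_le_two_of_normal_Cm_sq_general r hact hconn harc hvt s hkt L hLnorm v m A hAle hAnorm hAiso p hp
    hpidx hpval
end

section
/- Let $\mathit{\Gamma}$ be a connected digraph with at least one arc, let $H$ be a finite group acting on $\mathit{\Gamma}$ by automorphisms, and suppose $\mathit{\Gamma}$ is $H$-vertex-transitive and $(H,k)$-arc-transitive for every $k$ with $1 \leq k \leq s$, where $s \geq 1$. Let $L$ be a normal subgroup of $H$ that is transitive on the vertex set, let $v$ be a vertex, and suppose $L_v$ has a normal subgroup $A$ isomorphic to the cyclic group $\mathrm{C}_m$ for some integer $m \geq 2$. If there exists a prime divisor $r$ of $m$ such that $r$ does not divide the index $[L_v : A]$ and $v_r(|H|/|L|) < v_r(m)$ (where $v_r$ denotes the $r$-adic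 valuation), then $s \leq 1$. -/
/-!
Let `R x` be the subgroup generated by the `p`-elements of `L_x`. As `p ∤ [L_v : A]`, every
`p`-element of `L_v` lies in `A`, so `R v` is the Sylow `p`-subgroup of the cyclic group `A`, of
order `p^a` with `a = v_p(m)`, and `H` permutes the family `R` by conjugation. The subgroups
`R x ⊓ R y` over the arcs `x → y` are all conjugate, and a subgroup of a cyclic group is determined
by its order, so `R v ⊓ R w` lies in every `R x` along a walk; by connectivity and faithfulness it
is trivial. Hence `R v` acts semiregularly on the out-neighbourhood `Γ⁺(v)` and `p^a ∣ |Γ⁺(v)|`.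
If `s ≥ 2`, then for arcs `u → v → w` the group `H_{uv}` is transitive on `Γ⁺(v)`, so `|Γ⁺(v)|`
divides `|H_{uv}| = |H_{vw}|`, and `p^{2a}` divides `|H_v| = |Γ⁺(v)| |H_{vw}|`. But
`|H_v| = |A| [L_v : A] [H_v : L_v]` with `[H_v : L_v] ∣ |H : L|`, whose `p`-part is below `p^a`.
-/

open Subgroup MulAction

theorem IsCyclic.subgroup_eq_of_card_eq {G : Type*} [Group G] [Finite G] [IsCyclic G]
    {K K' : Subgroup G} (h : Nat.card K = Nat.card K') : K = K' := by
  let _ := IsCyclic.commGroup (α := G)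
  have eq_ker : ∀ M : Subgroup G, M = (powMonoidHom (Nat.card M) : G →* G).ker := fun M ↦
    eq_of_le_of_card_ge (fun g hg ↦
        congrArg Subtype.val (pow_card_eq_one' (G := M) (x := ⟨g, hg⟩)))
      (by rw [IsCyclic.card_powMonoidHom_ker, Nat.gcd_eq_right (card_subgroup_dvd_card M)])
  rw [eq_ker K, eq_ker K', h]

theorem Subgroup.eq_of_card_eq_of_le_of_isCyclic {G : Type*} [Group G] {C K K' : Subgroup G}
    [Finite C] [IsCyclic C] (hK : K ≤ C) (hK' : K' ≤ C) (h : Nat.card K = Nat.card K') :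
    K = K' := by
  have : K.subgroupOf C = K'.subgroupOf C := IsCyclic.subgroup_eq_of_card_eq <| by
    rwa [Nat.card_congr (subgroupOfEquivOfLe hK).toEquiv,
      Nat.card_congr (subgroupOfEquivOfLe hK').toEquiv]
  rwa [subgroupOf_inj, inf_of_le_left hK, inf_of_le_left hK'] at this

theorem Subgroup.mem_of_pow_prime_pow_eq_one {G : Type*} [Group G] {N : Subgroup G} [N.Normal]
    {p : ℕ} (hp : p.Prime) (hN : ¬ p ∣ N.index) {g : G} {k : ℕ} (hg : g ^ p ^ k = 1) : g ∈ N := by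
  have hcop : (p ^ k).Coprime N.index := Nat.Coprime.pow_left k (hp.coprime_iff_not_dvd.2 hN)
  have hord : orderOf (g : G ⧸ N) = 1 :=
    Nat.eq_one_of_dvd_coprimes hcop
      (orderOf_dvd_of_pow_eq_one (by rw [← QuotientGroup.mk_pow, hg]; rfl))
      (index_eq_card N ▸ _root_.orderOf_dvd_natCard _)
  exact (QuotientGroup.eq_one_iff g).1 (orderOf_eq_one_iff.1 hord)

theorem Sylow.mem_of_pow_prime_pow_eq_one_of_isCyclic {G : Type*} [Group G] [Finite G] [IsCyclic G]
    {p : ℕ} [Fact p.Prime] (P : Sylow p G) {g : G} {k : ℕ} (hg : g ^ p ^ k = 1) : g ∈ P := by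
  let _ := IsCyclic.commGroup (α := G)
  have hpg : IsPGroup p (zpowers g) := by
    obtain ⟨j, -, hj⟩ := (Nat.dvd_prime_pow Fact.out).1 (orderOf_dvd_of_pow_eq_one hg)
    exact IsPGroup.of_card (by rw [Nat.card_zpowers, hj])
  exact hpg.le_sylow_of_normal P (mem_zpowers g)

theorem Subgroup.exists_le_card_eq_forall_pow_prime_pow_mem {G : Type*} [Group G] [Finite G]
    {A K : Subgroup G} [IsCyclic A] [(A.subgroupOf K).Normal]
    {p : ℕ} [hp : Fact p.Prime] (hpA : ¬ p ∣ A.relIndex K) :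
    ∃ P ≤ A, Nat.card P = p ^ (Nat.card A).factorization p ∧
      ∀ g ∈ K, ∀ k : ℕ, g ^ p ^ k = 1 → g ∈ P := by
  obtain ⟨S⟩ := (inferInstance : Nonempty (Sylow p A))
  refine ⟨(S : Subgroup A).map A.subtype, map_subtype_le _, ?_, fun g hgK k hg ↦ ?_⟩
  · rw [card_map_of_injective A.subtype_injective, S.card_eq_multiplicity]
  have hgA : g ∈ A := mem_subgroupOf.1 <|
    mem_of_pow_prime_pow_eq_one (g := (⟨g, hgK⟩ : K)) hp.out hpA (Subtype.ext hg)
  exact mem_map_of_mem _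
    (S.mem_of_pow_prime_pow_eq_one_of_isCyclic (g := (⟨g, hgA⟩ : A)) (Subtype.ext hg))

theorem MulAction.card_dvd_ncard_of_smul_eq_self {G X : Type*} [Group G] [MulAction G X]
    {S : Set X} (hS : ∀ g : G, ∀ x ∈ S, g • x ∈ S) (hfree : ∀ g : G, ∀ x ∈ S, g • x = x → g = 1) :
    Nat.card G ∣ S.ncard := by
  let S' : SubMulAction G X := ⟨S, fun g _ hx ↦ hS g _ hx⟩
  have hstab : ∀ x : S', stabilizer G x = ⊥ := fun x ↦
    (eq_bot_iff_forall _).2 fun g hg ↦ hfree g x x.2 (congrArg Subtype.val hg)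
  rw [← Nat.card_coe_set_eq]
  change Nat.card G ∣ Nat.card S'
  rw [Nat.card_congr (selfEquivOrbitsQuotientProd hstab), Nat.card_prod]
  exact dvd_mul_left _ _

theorem MulAction.ncard_orbit_mul_card_inf_stabilizer {H V : Type*} [Group H] [MulAction H V]
    (K : Subgroup H) (w : V) :
    (orbit K w).ncard * Nat.card (K ⊓ stabilizer H w : Subgroup H) = Nat.card K := by
  have hstab : stabilizer K w = (stabilizer H w).subgroupOf K := by ext; rfl
  rw [← index_stabilizer, hstab, ← relIndex, ← relIndex_bot_left, ← relIndex_bot_left,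
    ← inf_relIndex_left, inf_comm, mul_comm]
  exact relIndex_mul_relIndex ⊥ (stabilizer H w ⊓ K) K bot_le inf_le_right

theorem Nat.factorization_le_of_sq_ordProj_dvd_mul {p m i j n : ℕ} (hp : p.Prime)
    (h : (p ^ m.factorization p) ^ 2 ∣ m * i * j) (hi : ¬ p ∣ i) (hj : j ∣ n) (hn : n ≠ 0) :
    m.factorization p ≤ n.factorization p := by
  rcases eq_or_ne m 0 with rfl | hm
  · simp
  have hi0 : i ≠ 0 := by rintro rfl; exact hi (dvd_zero p)
  have hj0 : j ≠ 0 := by rintro rfl; exact hn (zero_dvd_iff.1 hj)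
  rw [← pow_mul, hp.pow_dvd_iff_le_factorization (by positivity),
    factorization_mul (by positivity) hj0, factorization_mul hm hi0, Finsupp.add_apply,
    Finsupp.add_apply, factorization_eq_zero_of_not_dvd hi] at h
  have := (factorization_le_iff_dvd hj0 hn).2 hj p
  omega

theorem Subgroup.card_eq_card_mul_relIndex_mul_relIndex {G : Type*} [Group G] {A L K : Subgroup G}
    (hA : A ≤ L ⊓ K) : Nat.card K = Nat.card A * A.relIndex (L ⊓ K) * L.relIndex K := by
  rw [← relIndex_bot_left, ← relIndex_bot_left, ← inf_relIndex_right L K,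
    relIndex_mul_relIndex ⊥ A _ bot_le hA, relIndex_mul_relIndex ⊥ _ K bot_le inf_le_right]

theorem SimpleGraph.Reachable.of_fromRel_of_iff {V : Type*} {r : V → V → Prop} {P : V → Prop}
    (hP : ∀ x y, r x y → (P x ↔ P y)) {x y : V} (hxy : (SimpleGraph.fromRel r).Reachable x y)
    (hx : P x) : P y := by
  obtain ⟨p⟩ := hxy
  induction p with
  | nil => exact hx
  | cons hadj _ ih => exact ih (hadj.2.elim (fun h ↦ (hP _ _ h).1 hx) fun h ↦ (hP _ _ h).2 hx)

section Digraph

variable {H V : Type*} [Group H] [MulAction H V] {r : V → V → Prop}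

theorem ArcTrans.exists_smul_eq_arc (h : ArcTrans H r 1) {x y x' y' : V} (hxy : r x y)
    (hxy' : r x' y') : ∃ g : H, g • x = x' ∧ g • y = y' := by
  obtain ⟨g, hg⟩ := h ![x, y] ![x', y'] (by simpa using hxy) (by simpa using hxy')
  exact ⟨g, hg 0, hg 1⟩

theorem ArcTrans.exists_smul_eq_twoArc (h : ArcTrans H r 2) {x y z x' y' z' : V} (hxy : r x y)
    (hyz : r y z) (hxy' : r x' y') (hyz' : r y' z') :
    ∃ g : H, g • x = x' ∧ g • y = y' ∧ g • z = z' := by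
  obtain ⟨g, hg⟩ := h ![x, y, z] ![x', y', z'] (by simp [Fin.forall_fin_two, hxy, hyz])
    (by simp [Fin.forall_fin_two, hxy', hyz'])
  exact ⟨g, hg 0, hg 1, hg 2⟩

theorem ArcTrans.orbit_stabilizer_eq (h : ArcTrans H r 1)
    (hact : ∀ (g : H) (u w : V), r u w → r (g • u) (g • w)) {v w : V} (hvw : r v w) :
    orbit (stabilizer H v) w = {y | r v y} := by
  ext y
  constructor
  · rintro ⟨g, rfl⟩
    simpa [Subgroup.smul_def, mem_stabilizer_iff.1 g.2] using hact g v w hvw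
  · intro hvy
    obtain ⟨g, hgv, hgw⟩ := h.exists_smul_eq_arc hvw hvy
    exact ⟨⟨g, hgv⟩, hgw⟩

theorem ArcTrans.orbit_inf_stabilizer_eq (h : ArcTrans H r 2)
    (hact : ∀ (g : H) (u w : V), r u w → r (g • u) (g • w)) {u v w : V} (huv : r u v)
    (hvw : r v w) : orbit (stabilizer H u ⊓ stabilizer H v : Subgroup H) w = {y | r v y} := by
  ext y
  constructor
  · rintro ⟨g, rfl⟩
    simpa [Subgroup.smul_def, mem_stabilizer_iff.1 g.2.2] using hact g v w hvw
  · intro hvy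
    obtain ⟨g, hgu, hgv, hgw⟩ := h.exists_smul_eq_twoArc huv hvw huv hvy
    exact ⟨⟨g, hgu, hgv⟩, hgw⟩

theorem card_inf_smul_of_smul_eq_map_conj {R : V → Subgroup H}
    (hR : ∀ (g : H) (x : V), R (g • x) = (R x).map (MulAut.conj g).toMonoidHom) (g : H) (x y : V) :
    Nat.card (R (g • x) ⊓ R (g • y) : Subgroup H) = Nat.card (R x ⊓ R y : Subgroup H) := by
  rw [hR, hR, ← map_inf _ _ _ (MulEquiv.injective _),
    card_map_of_injective (MulEquiv.injective _)]

theorem sq_card_dvd_card_stabilizer (h1 : ArcTrans H r 1) (h2 : ArcTrans H r 2)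
    (hact : ∀ (g : H) (u w : V), r u w → r (g • u) (g • w)) {u v w : V} (huv : r u v)
    (hvw : r v w) {N : Subgroup H} (hN : N ≤ stabilizer H v)
    (hfree : ∀ n ∈ N, ∀ y, r v y → n • y = y → n = 1) :
    Nat.card N ^ 2 ∣ Nat.card (stabilizer H v) := by
  have hNΩ : Nat.card N ∣ {y | r v y}.ncard :=
    card_dvd_ncard_of_smul_eq_self (G := N)
      (fun n y hy ↦ by simpa [Subgroup.smul_def, mem_stabilizer_iff.1 (hN n.2)] using hact n v y hy)
      (fun n y hy hny ↦ Subtype.ext (hfree n n.2 y hy hny))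
  have hΩuv : {y | r v y}.ncard ∣ Nat.card (stabilizer H u ⊓ stabilizer H v : Subgroup H) :=
    h2.orbit_inf_stabilizer_eq hact huv hvw ▸ Dvd.intro _ (ncard_orbit_mul_card_inf_stabilizer _ w)
  have huv_vw : Nat.card (stabilizer H u ⊓ stabilizer H v : Subgroup H) =
      Nat.card (stabilizer H v ⊓ stabilizer H w : Subgroup H) := by
    obtain ⟨g, rfl, rfl⟩ := h1.exists_smul_eq_arc huv hvw
    exact (card_inf_smul_of_smul_eq_map_conj stabilizer_smul_eq_stabilizer_map_conj g u _).symm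
  have hv : {y | r v y}.ncard * Nat.card (stabilizer H v ⊓ stabilizer H w : Subgroup H) =
      Nat.card (stabilizer H v) :=
    h1.orbit_stabilizer_eq hact hvw ▸ ncard_orbit_mul_card_inf_stabilizer _ w
  calc Nat.card N ^ 2 = Nat.card N * Nat.card N := sq _
    _ ∣ {y | r v y}.ncard * {y | r v y}.ncard := mul_dvd_mul hNΩ hNΩ
    _ ∣ {y | r v y}.ncard * Nat.card (stabilizer H u ⊓ stabilizer H v : Subgroup H) :=
      mul_dvd_mul_left _ hΩuv
    _ = Nat.card (stabilizer H v) := by rw [huv_vw, hv]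

theorem inf_eq_bot_of_rel [Finite H] [FaithfulSMul H V] {R : V → Subgroup H}
    (hR : ∀ (g : H) (x : V), R (g • x) = (R x).map (MulAut.conj g).toMonoidHom)
    (hcyc : ∀ x, IsCyclic (R x)) (hfix : ∀ x, R x ≤ stabilizer H x)
    (hconn : (SimpleGraph.fromRel r).Connected) (h1 : ArcTrans H r 1) {x y : V} (hxy : r x y) :
    R x ⊓ R y = ⊥ := by
  have hcard : ∀ x' y', r x' y' → Nat.card (R x' ⊓ R y' : Subgroup H) =
      Nat.card (R x ⊓ R y : Subgroup H) := by
    intro x' y' hxy'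
    obtain ⟨g, rfl, rfl⟩ := h1.exists_smul_eq_arc hxy hxy'
    exact card_inf_smul_of_smul_eq_map_conj hR g x y
  have hstep : ∀ x' y', r x' y' → (R x ⊓ R y ≤ R x' ↔ R x ⊓ R y ≤ R y') := by
    intro x' y' hxy'
    constructor
    · intro hD
      rw [eq_of_card_eq_of_le_of_isCyclic hD inf_le_left (hcard x' y' hxy').symm]
      exact inf_le_right
    · intro hD
      rw [eq_of_card_eq_of_le_of_isCyclic hD inf_le_right (hcard x' y' hxy').symm]
      exact inf_le_left
  have hall : ∀ z, R x ⊓ R y ≤ R z := fun z ↦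
    (hconn.preconnected x z).of_fromRel_of_iff hstep inf_le_left
  refine (eq_bot_iff_forall _).2 fun d hd ↦ FaithfulSMul.eq_of_smul_eq_smul (α := V) fun z ↦ ?_
  rw [one_smul]
  exact hfix z (hall z hd)

variable (L : Subgroup H) (p : ℕ)

def pElementClosure (x : V) : Subgroup H :=
  closure {g | g ∈ L ∧ g • x = x ∧ ∃ k : ℕ, g ^ p ^ k = 1}

theorem pElementClosure_le (x : V) : pElementClosure L p x ≤ L ⊓ stabilizer H x :=
  closure_le _ |>.2 fun _ hg ↦ ⟨hg.1, hg.2.1⟩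

variable {L p} in
theorem mem_pElementClosure {x : V} {g : H} (hgL : g ∈ L) (hgx : g • x = x) {k : ℕ}
    (hg : g ^ p ^ k = 1) : g ∈ pElementClosure L p x :=
  subset_closure ⟨hgL, hgx, k, hg⟩

theorem pElementClosure_smul [L.Normal] (g : H) (x : V) :
    pElementClosure L p (g • x) = (pElementClosure L p x).map (MulAut.conj g).toMonoidHom := by
  rw [pElementClosure, pElementClosure, MonoidHom.map_closure]
  congr 1
  ext t
  constructor
  · rintro ⟨htL, htx, k, hk⟩
    refine ⟨g⁻¹ * t * g, ⟨by simpa using ‹L.Normal›.conj_mem t htL g⁻¹, ?_, k, ?_⟩,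
      by simp [mul_assoc]⟩
    · rw [mul_smul, mul_smul, htx, inv_smul_smul]
    · simpa [hk] using conj_pow (a := g⁻¹) (b := t) (i := p ^ k)
  · rintro ⟨t, ⟨htL, htx, k, hk⟩, rfl⟩
    refine ⟨‹L.Normal›.conj_mem t htL g, ?_, k, ?_⟩
    · simp [mul_smul, htx]
    · simp [conj_pow, hk]

variable {L p} in
theorem pElementClosure_eq {x : V} {P : Subgroup H} (hPL : P ≤ L ⊓ stabilizer H x)
    (hP : IsPGroup p P) (hmem : ∀ g ∈ L ⊓ stabilizer H x, ∀ k : ℕ, g ^ p ^ k = 1 → g ∈ P) :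
    pElementClosure L p x = P := by
  refine le_antisymm (closure_le _ |>.2 fun g ⟨hgL, hgx, k, hk⟩ ↦ hmem g ⟨hgL, hgx⟩ k hk)
    fun g hg ↦ ?_
  obtain ⟨k, hk⟩ := hP ⟨g, hg⟩
  exact mem_pElementClosure (hPL hg).1 (hPL hg).2 (k := k) (congrArg Subtype.val hk)

variable {L p} in
theorem pElementClosure_inf_eq_bot [Finite H] [FaithfulSMul H V] [L.Normal]
    (hvt : ∀ u w : V, ∃ h : H, h • u = w) (hconn : (SimpleGraph.fromRel r).Connected)
    (h1 : ArcTrans H r 1) {v : V} (hcyc : IsCyclic (pElementClosure L p v)) {x y : V}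
    (hxy : r x y) : pElementClosure L p x ⊓ pElementClosure L p y = ⊥ := by
  refine inf_eq_bot_of_rel (pElementClosure_smul L p) (fun z ↦ ?_)
    (fun z ↦ (pElementClosure_le L p z).trans inf_le_right) hconn h1 hxy
  obtain ⟨g, rfl⟩ := hvt v z
  rw [pElementClosure_smul]
  exact ((MulAut.conj g).subgroupMap _).isCyclic.1 hcyc

variable {L p} in
theorem eq_one_of_mem_pElementClosure_of_smul_eq_self [Finite H] [FaithfulSMul H V] [L.Normal]
    (hvt : ∀ u w : V, ∃ h : H, h • u = w) (hconn : (SimpleGraph.fromRel r).Connected)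
    (h1 : ArcTrans H r 1) {v : V} (hcyc : IsCyclic (pElementClosure L p v))
    (hpg : IsPGroup p (pElementClosure L p v)) {n : H} (hn : n ∈ pElementClosure L p v) {y : V}
    (hvy : r v y) (hny : n • y = y) : n = 1 := by
  obtain ⟨k, hk⟩ := hpg ⟨n, hn⟩
  have hny : n ∈ pElementClosure L p y :=
    mem_pElementClosure (pElementClosure_le L p v hn).1 hny (congrArg Subtype.val hk)
  have hnvy : n ∈ pElementClosure L p v ⊓ pElementClosure L p y := ⟨hn, hny⟩
  rwa [pElementClosure_inf_eq_bot hvt hconn h1 hcyc hvy, mem_bot] at hnvy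

end Digraph

theorem s_le_one_of_normal_Cm_general {V H : Type*} [Group H] [Finite H]
    [MulAction H V] [FaithfulSMul H V]
    (r : V → V → Prop)
    (hact : ∀ (h : H) (u w : V), r u w → r (h • u) (h • w))
    (hconn : (SimpleGraph.fromRel r).Connected)
    (harc : ∃ u w : V, r u w)
    (hvt : ∀ u w : V, ∃ h : H, h • u = w)
    (s : ℕ)
    (hkt : ∀ k, 1 ≤ k → k ≤ s → ArcTrans H r k)
    (L : Subgroup H) (hLnorm : L.Normal)
    (v : V) (m : ℕ)
    (A : Subgroup H) (hAle : A ≤ L ⊓ MulAction.stabilizer H v)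
    (hAnorm : (A.subgroupOf (L ⊓ MulAction.stabilizer H v)).Normal)
    (hAiso : Nonempty (A ≃* Multiplicative (ZMod m)))
    (p : ℕ) (hp : p.Prime)
    (hpidx : ¬ p ∣ A.relIndex (L ⊓ MulAction.stabilizer H v))
    (hpval : (L.index).factorization p < m.factorization p) :
    s ≤ 1 := by
  by_contra! hs
  have h1 := hkt 1 le_rfl hs.le
  have h2 := hkt 2 one_le_two hs
  have : Fact p.Prime := ⟨hp⟩
  obtain ⟨e⟩ := hAiso
  have : IsCyclic A := e.symm.isCyclic.1 inferInstance
  have hAcard : Nat.card A = m := (Nat.card_congr e.toEquiv).trans (Nat.card_zmod m)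
  obtain ⟨P, hPA, hPcard, hPmem⟩ := exists_le_card_eq_forall_pow_prime_pow_mem hpidx
  have hRv : pElementClosure L p v = P :=
    pElementClosure_eq (hPA.trans hAle) (IsPGroup.of_card hPcard) hPmem
  obtain ⟨u₀, w₀, h₀⟩ := harc
  obtain ⟨g, hg⟩ := hvt w₀ v
  obtain ⟨g', hg'⟩ := hvt u₀ v
  have hdvd := sq_card_dvd_card_stabilizer h1 h2 hact (hg ▸ hact g u₀ w₀ h₀)
    (hg' ▸ hact g' u₀ w₀ h₀) (hPA.trans (hAle.trans inf_le_right)) fun n hn _ ↦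
      eq_one_of_mem_pElementClosure_of_smul_eq_self hvt hconn h1
        (hRv ▸ Subgroup.isCyclic_of_le hPA) (hRv ▸ IsPGroup.of_card hPcard) (hRv ▸ hn)
  rw [hPcard, hAcard, card_eq_card_mul_relIndex_mul_relIndex hAle, hAcard] at hdvd
  exact hpval.not_ge (Nat.factorization_le_of_sq_ordProj_dvd_mul hp hdvd hpidx
    (relIndex_dvd_index_of_normal L _) index_ne_zero_of_finite)

/-- If `L ⊴ H` is vertex-transitive, `L_v` has a normal subgroup `A ≅ C_m`, and
there is a prime `r` dividing `m` with `r ∤ [L_v : A]` and `v_r(|H|/|L|) < v_r(m)`,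
then `s ≤ 1`. -/
theorem s_le_one_of_normal_Cm {V H : Type*} [Fintype V] [Group H] [Finite H]
    [MulAction H V] [FaithfulSMul H V]
    (r : V → V → Prop) (hirr : Irreflexive r) (hanti : ∀ u w, r u w → ¬ r w u)
    (hact : ∀ (h : H) (u w : V), r u w → r (h • u) (h • w))
    (hconn : (SimpleGraph.fromRel r).Connected)
    (harc : ∃ u w : V, r u w)
    (hvt : ∀ u w : V, ∃ h : H, h • u = w)
    (s : ℕ) (hs : 1 ≤ s)
    (hkt : ∀ k, 1 ≤ k → k ≤ s → ArcTrans H r k)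
    (L : Subgroup H) (hLnorm : L.Normal)
    (hLtrans : ∀ u w : V, ∃ g ∈ L, g • u = w)
    (v : V) (m : ℕ) (hm : 2 ≤ m)
    (A : Subgroup H) (hAle : A ≤ L ⊓ MulAction.stabilizer H v)
    (hAnorm : (A.subgroupOf (L ⊓ MulAction.stabilizer H v)).Normal)
    (hAiso : Nonempty (A ≃* Multiplicative (ZMod m)))
    (p : ℕ) (hp : p.Prime) (hpm : p ∣ m)
    (hpidx : ¬ p ∣ A.relIndex (L ⊓ MulAction.stabilizer H v))
    (hpval : (L.index).factorization p < m.factorization p) :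
    s ≤ 1 :=
  s_le_one_of_normal_Cm_general r hact hconn harc hvt s hkt L hLnorm v m A hAle hAnorm hAiso p hp
    hpidx hpval
end

section
/- Let $\mathit{\Gamma}$ be a digraph, let $H$ be a group acting on $\mathit{\Gamma}$ by automorphisms, let $i \geq 1$, and suppose $\mathit{\Gamma}$ is $(H,i+1)$-arc-transitive. Let $v_0 \to v_1 \to \cdots \to v_{i+1}$ be an $(i+1)$-arc of $\mathit{\Gamma}$. Then $H_{v_1 \cdots v_i} = H_{v_0 v_1 \cdots v_i} \, H_{v_1 \cdots v_i v_{i+1}}$, i.e., every element of the pointwise stabilizer of $(v_1, \ldots, v_i)$ is a product of an element fixing $v_0, v_1, \ldots, v_i$ pointwise with an element fixing $v_1, \ldots, v_{i+1}$ pointwise. -/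
/-- For an `(H,i+1)`-arc-transitive digraph with an `(i+1)`-arc
`v₀ → v₁ → ⋯ → v_{i+1}`, one has
`H_{v₁⋯v_i} = H_{v₀v₁⋯v_i} H_{v₁⋯v_i v_{i+1}}`. -/
theorem pointwise_stabilizer_factorisation {V H : Type*} [Fintype V]
    [Group H] [MulAction H V] [FaithfulSMul H V]
    (r : V → V → Prop) (hirr : Irreflexive r) (hanti : ∀ u w, r u w → ¬ r w u)
    (hact : ∀ (h : H) (u w : V), r u w → r (h • u) (h • w))
    (i : ℕ) (hi : 1 ≤ i)
    (ht : ArcTrans H r (i + 1))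
    (a : Fin (i + 2) → V) (ha : ∀ j : Fin (i + 1), r (a j.castSucc) (a j.succ)) :
    ∀ g ∈ ⨅ j : Fin i, MulAction.stabilizer H (a j.succ.castSucc),
      ∃ x ∈ ⨅ j : Fin (i + 1), MulAction.stabilizer H (a j.castSucc),
        ∃ y ∈ ⨅ j : Fin (i + 1), MulAction.stabilizer H (a j.succ), g = x * y := by
  intro g hg
  simp only [Subgroup.mem_iInf, MulAction.mem_stabilizer_iff] at hg
  set L : Fin (i + 2) := Fin.last (i + 1) with hL
  set b : Fin (i + 2) → V := Function.update a L (g • a L) with hb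
  have hbne : ∀ k : Fin (i + 2), k ≠ L → b k = a k := by
    intro k hk; exact Function.update_of_ne hk _ _
  have hbL : b L = g • a L := Function.update_self _ _ _
  -- b is an (i+1)-arc
  have harc : ∀ j : Fin (i + 1), r (b j.castSucc) (b j.succ) := by
    intro j
    have hc : j.castSucc ≠ L := (Fin.castSucc_lt_last j).ne
    rw [hbne _ hc]
    by_cases hs : j.succ = L
    · rw [hs, hbL]
      have hjval : (j : ℕ) = i := by
        have := congrArg Fin.val hs
        simp only [Fin.val_succ, hL, Fin.val_last] at this
        omega
      have hfix : g • a j.castSucc = a j.castSucc := by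
        have hidx : j.castSucc = ((⟨i - 1, by omega⟩ : Fin i)).succ.castSucc := by
          simp only [Fin.ext_iff, Fin.coe_castSucc, Fin.val_succ]
          omega
        rw [hidx]
        exact hg _
      have := hact g _ _ (ha j)
      rw [hfix] at this
      have hsL : a j.succ = a L := by rw [hs]
      rw [← hsL]
      exact this
    · rw [hbne _ hs]; exact ha j
  obtain ⟨h, hh⟩ := ht b a harc ha
  refine ⟨h⁻¹, ?_, h * g, ?_, by group⟩
  · simp only [Subgroup.mem_iInf, MulAction.mem_stabilizer_iff]
    intro j
    have hc : j.castSucc ≠ L := (Fin.castSucc_lt_last j).ne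
    have := hh j.castSucc
    rw [hbne _ hc] at this
    rw [inv_smul_eq_iff, this]
  · simp only [Subgroup.mem_iInf, MulAction.mem_stabilizer_iff]
    intro j
    rw [mul_smul]
    by_cases hs : j.succ = L
    · rw [hs, ← hbL, hh]
    · have hjlt : (j : ℕ) < i := by
        have : (j : ℕ) + 1 ≠ i + 1 := by
          intro hcon
          apply hs
          simp only [hL, Fin.ext_iff, Fin.val_succ, Fin.val_last]
          exact hcon
        omega
      have hgfix : g • a j.succ = a j.succ := by
        have hidx : j.succ = ((⟨(j : ℕ), hjlt⟩ : Fin i)).succ.castSucc := by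
          simp only [Fin.ext_iff, Fin.coe_castSucc, Fin.val_succ]
        rw [hidx]
        exact hg _
      calc h • (g • a j.succ) = h • b j.succ := by rw [hgfix, hbne _ hs]
        _ = a j.succ := hh _
end

section
/- Let $\mathit{\Gamma}$ be a connected digraph, let $H$ be a group acting on $\mathit{\Gamma}$ by automorphisms, and suppose $\mathit{\Gamma}$ is $H$-arc-transitive. Let $v \to v_1$ be an arc of $\mathit{\Gamma}$ and let $h \in H$ be such that $v^h = v_1$. Then no nontrivial normal subgroup of $H_v$ is normalized by $h$; that is, if $N$ is a normal subgroup of $H_v$ with $h^{-1} N h = N$, then $N$ is the trivial subgroup. -/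
open MulAction

theorem ArcTrans.exists_smul_eq_of_arc {H V : Type*} [Group H] [MulAction H V]
    {r : V → V → Prop} (hat : ArcTrans H r 1) {v v₁ u w : V} (hvv₁ : r v v₁) (huw : r u w) :
    ∃ g : H, g • v = u ∧ g • v₁ = w := by
  obtain ⟨g, hg⟩ := hat ![v, v₁] ![u, w] (fun i => by fin_cases i; exact hvv₁)
    (fun i => by fin_cases i; exact huw)
  exact ⟨g, hg 0, hg 1⟩

theorem SimpleGraph.Preconnected.mem_of_adj_closed {V : Type*} {G : SimpleGraph V}
    (hG : G.Preconnected) {S : Set V} {v : V} (hv : v ∈ S)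
    (hS : ∀ a b, G.Adj a b → a ∈ S → b ∈ S) (u : V) : u ∈ S := by
  have hreach : Relation.ReflTransGen G.Adj v u := (G.reachable_iff_reflTransGen v u).mp (hG v u)
  induction hreach with
  | refl => exact hv
  | tail _ hab ih => exact hS _ _ hab ih

section StabilizerLE

variable {H V : Type*} [Group H] [MulAction H V] {K : Subgroup H} {v : V}

theorem mem_of_smul_eq_smul_of_stabilizer_le (hstab : stabilizer H v ≤ K) {g k : H}
    (hk : k ∈ K) (hgk : g • v = k • v) : g ∈ K := by
  have hkg : k⁻¹ * g ∈ K := hstab <| by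
    rw [mem_stabilizer_iff, mul_smul, hgk, inv_smul_smul]
  simpa using K.mul_mem hk hkg

theorem exists_mem_smul_eq_of_adj {r : V → V → Prop} {v₁ : V} {h : H}
    (harc : ∀ u w, r u w → ∃ g : H, g • v = u ∧ g • v₁ = w)
    (hstab : stabilizer H v ≤ K) (hhK : h ∈ K) (hh : h • v = v₁) {a b : V}
    (hab : (SimpleGraph.fromRel r).Adj a b) (ha : ∃ k ∈ K, k • v = a) :
    ∃ k ∈ K, k • v = b := by
  obtain ⟨k, hkK, rfl⟩ := ha
  obtain ⟨-, hr | hr⟩ := hab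
  · obtain ⟨g, hgv, hgv₁⟩ := harc _ _ hr
    have hgK : g ∈ K := mem_of_smul_eq_smul_of_stabilizer_le hstab hkK hgv
    exact ⟨g * h, K.mul_mem hgK hhK, by rw [mul_smul, hh, hgv₁]⟩
  · obtain ⟨g, hgv, hgv₁⟩ := harc _ _ hr
    have hghK : g * h ∈ K :=
      mem_of_smul_eq_smul_of_stabilizer_le hstab hkK (by rw [mul_smul, hh, hgv₁])
    exact ⟨g, by simpa using K.mul_mem hghK (K.inv_mem hhK), hgv⟩

end StabilizerLE

theorem Subgroup.eq_bot_of_le_stabilizer_of_normalizer_transitive {H V : Type*} [Group H]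
    [MulAction H V] [FaithfulSMul H V] {N : Subgroup H} {v : V} (hNv : N ≤ stabilizer H v)
    (htrans : ∀ u : V, ∃ k ∈ normalizer (N : Set H), k • v = u) : N = ⊥ := by
  refine (eq_bot_iff_forall N).mpr fun n hn => eq_of_smul_eq_smul (α := V) fun u => ?_
  obtain ⟨k, hkK, rfl⟩ := htrans u
  have hconj : k⁻¹ * n * k ∈ N := (mem_normalizer_iff''.mp hkK n).mp hn
  calc n • k • v = k • (k⁻¹ * n * k) • v := by simp [mul_smul]
    _ = (1 : H) • k • v := by rw [hNv hconj, one_smul]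

theorem no_nontrivial_normal_subgroup_normalized_general {V H : Type*}
    [Group H] [MulAction H V] [FaithfulSMul H V]
    (r : V → V → Prop)
    (hconn : (SimpleGraph.fromRel r).Connected)
    (hat : ArcTrans H r 1)
    (v v1 : V) (hvv1 : r v v1) (h : H) (hh : h • v = v1)
    (N : Subgroup H) (hNle : N ≤ MulAction.stabilizer H v)
    (hNnorm : (N.subgroupOf (MulAction.stabilizer H v)).Normal)
    (hNconj : ∀ g : H, g ∈ N ↔ h⁻¹ * g * h ∈ N) :
    N = ⊥ := by
  have hstab : stabilizer H v ≤ Subgroup.normalizer (N : Set H) :=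
    Subgroup.le_normalizer_of_normal_subgroupOf hNle
  have hhK : h ∈ Subgroup.normalizer (N : Set H) := Subgroup.mem_normalizer_iff''.mpr hNconj
  refine Subgroup.eq_bot_of_le_stabilizer_of_normalizer_transitive hNle fun u => ?_
  refine hconn.preconnected.mem_of_adj_closed (S := {u | ∃ k ∈ _, k • v = u})
    ⟨1, Subgroup.one_mem _, one_smul H v⟩ (fun a b hab ha => ?_) u
  exact exists_mem_smul_eq_of_adj (fun _ _ huw => hat.exists_smul_eq_of_arc hvv1 huw)
    hstab hhK hh hab ha

/-- For a connected `H`-arc-transitive digraph with an arc `v → v₁` and `h ∈ H`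
with `v^h = v₁`, no nontrivial normal subgroup of `H_v` is normalized by `h`. -/
theorem no_nontrivial_normal_subgroup_normalized {V H : Type*} [Fintype V]
    [Group H] [MulAction H V] [FaithfulSMul H V]
    (r : V → V → Prop) (hirr : Irreflexive r) (hanti : ∀ u w, r u w → ¬ r w u)
    (hact : ∀ (h : H) (u w : V), r u w → r (h • u) (h • w))
    (hconn : (SimpleGraph.fromRel r).Connected)
    (hat : ArcTrans H r 1)
    (v v1 : V) (hvv1 : r v v1) (h : H) (hh : h • v = v1)
    (N : Subgroup H) (hNle : N ≤ MulAction.stabilizer H v)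
    (hNnorm : (N.subgroupOf (MulAction.stabilizer H v)).Normal)
    (hNconj : ∀ g : H, g ∈ N ↔ h⁻¹ * g * h ∈ N) :
    N = ⊥ :=
  no_nontrivial_normal_subgroup_normalized_general r hconn hat v v1 hvv1 h hh N hNle hNnorm hNconj
end

section
/- Let $\mathit{\Gamma}$ be a digraph with at least one arc, let $H$ be a group acting on $\mathit{\Gamma}$ by automorphisms, and suppose $\mathit{\Gamma}$ is $H$-vertex-transitive and $(H,s)$-arc-transitive with $s \geq 2$. Let $M$ be a normal subgroup of $H$ that is transitive on the vertex set. Then $\mathit{\Gamma}$ is $(M, s-1)$-arc-transitive. -/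
/-- Shift lemma: if `H` is `s`-arc-transitive and `M ⊴ H` is vertex-transitive,
then for any `s`-arc there is an element of `M` shifting it by one step. -/
lemma shift_lemma {V H : Type*} [Group H] [MulAction H V]
    (r : V → V → Prop)
    (hact : ∀ (h : H) (u w : V), r u w → r (h • u) (h • w))
    (s : ℕ) (hs : 0 < s) (hst : ArcTrans H r s)
    (M : Subgroup H) (hMnorm : M.Normal)
    (hMtrans : ∀ u w : V, ∃ g ∈ M, g • u = w)
    (c : ℕ → V) (hc : ∀ k < s, r (c k) (c (k + 1))) :
    ∃ n ∈ M, ∀ k < s, n • c k = c (k + 1) := by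
  obtain ⟨m, hmM, hm⟩ := hMtrans (c 0) (c 1)
  have hA : ∀ k : ℕ, r (m ^ k • c 0) (m ^ (k + 1) • c 0) := by
    intro k
    have h1 : m ^ (k + 1) • c 0 = m ^ k • c 1 := by
      rw [pow_succ, mul_smul, hm]
    rw [h1]
    exact hact _ _ _ (hc 0 hs)
  obtain ⟨g, hg⟩ := hst (fun i => m ^ (i : ℕ) • c 0) (fun i => c (i : ℕ))
    (fun i => by simpa using hA i.1)
    (fun i => by simpa using hc i.1 i.isLt)
  refine ⟨g * m * g⁻¹, hMnorm.conj_mem m hmM g, ?_⟩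
  intro k hk
  have h1 : g • m ^ k • c 0 = c k := hg ⟨k, by omega⟩
  have h2 : g • m ^ (k + 1) • c 0 = c (k + 1) := hg ⟨k + 1, by omega⟩
  have h3 : g⁻¹ • c k = m ^ k • c 0 := by rw [← h1]; simp
  calc (g * m * g⁻¹) • c k = g • m • g⁻¹ • c k := by
        simp [mul_smul]
    _ = g • m ^ (k + 1) • c 0 := by rw [h3, pow_succ', mul_smul]
    _ = c (k + 1) := h2

/-- If `Γ` is `(H,s)`-arc-transitive with `s ≥ 2` and `M ⊴ H` is vertex-transitive,
then `Γ` is `(M, s-1)`-arc-transitive. -/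
theorem normal_vertex_trans_arc_trans {V H : Type*} [Fintype V]
    [Group H] [MulAction H V] [FaithfulSMul H V]
    (r : V → V → Prop) (hirr : Irreflexive r) (hanti : ∀ u w, r u w → ¬ r w u)
    (hact : ∀ (h : H) (u w : V), r u w → r (h • u) (h • w))
    (harc : ∃ u w : V, r u w)
    (hvt : ∀ u w : V, ∃ h : H, h • u = w)
    (s : ℕ) (hs : 2 ≤ s) (hst : ArcTrans H r s)
    (M : Subgroup H) (hMnorm : M.Normal)
    (hMtrans : ∀ u w : V, ∃ g ∈ M, g • u = w) :
    ∀ a b : Fin (s - 1 + 1) → V,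
      (∀ i : Fin (s - 1), r (a i.castSucc) (a i.succ)) →
      (∀ i : Fin (s - 1), r (b i.castSucc) (b i.succ)) →
      ∃ g ∈ M, ∀ i, g • a i = b i := by
  obtain ⟨t, rfl⟩ : ∃ t, s = t + 1 := ⟨s - 1, by omega⟩
  show ∀ a b : Fin (t + 1) → V,
      (∀ i : Fin t, r (a i.castSucc) (a i.succ)) →
      (∀ i : Fin t, r (b i.castSucc) (b i.succ)) →
      ∃ g ∈ M, ∀ i, g • a i = b i
  intro a b ha hb
  have ht : 1 ≤ t := by omega
  obtain ⟨n0, hn0M, hn0⟩ := hMtrans (a (Fin.last t)) (b 0)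
  set C : ℕ → V := fun k =>
    if h : k ≤ t then n0 • a ⟨k, by omega⟩
    else if h2 : k ≤ 2 * t then b ⟨k - t, by omega⟩ else b 0 with hCdef
  have hC1 : ∀ k, (h : k ≤ t) → C k = n0 • a ⟨k, by omega⟩ := by
    intro k h
    simp only [hCdef, dif_pos h]
  have hC2 : ∀ (k : ℕ) (h1 : t ≤ k) (h2 : k ≤ 2 * t), C k = b ⟨k - t, by omega⟩ := by
    intro k h1 h2
    rcases Nat.eq_or_lt_of_le h1 with h1 | h1
    · subst h1
      rw [hC1 t le_rfl]
      have e : a ⟨t, by omega⟩ = a (Fin.last t) := rfl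
      rw [e, hn0]
      congr 1
      exact Fin.ext (by simp)
    · simp only [hCdef]
      rw [dif_neg (by omega), dif_pos h2]
  have hCarc : ∀ k < 2 * t, r (C k) (C (k + 1)) := by
    intro k hk
    by_cases h : k + 1 ≤ t
    · rw [hC1 k (by omega), hC1 (k + 1) h]
      exact hact n0 _ _ (ha ⟨k, by omega⟩)
    · rw [hC2 k (by omega) (by omega), hC2 (k + 1) (by omega) (by omega)]
      have h3 : r (b (Fin.castSucc ⟨k - t, by omega⟩)) (b (Fin.succ ⟨k - t, by omega⟩)) :=
        hb ⟨k - t, by omega⟩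
      have e1 : (Fin.castSucc (⟨k - t, by omega⟩ : Fin t)) = (⟨k - t, by omega⟩ : Fin (t+1)) :=
        Fin.ext rfl
      have e2 : (Fin.succ (⟨k - t, by omega⟩ : Fin t)) = (⟨k + 1 - t, by omega⟩ : Fin (t+1)) :=
        Fin.ext (by simp; omega)
      rwa [e1, e2] at h3
  have key : ∀ j, j ≤ t → ∃ n ∈ M, ∀ k ≤ t, n • C k = C (k + j) := by
    intro j
    induction j with
    | zero => exact fun _ => ⟨1, one_mem M, by simp⟩
    | succ j ih =>
      intro hj
      obtain ⟨n, hnM, hn⟩ := ih (by omega)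
      obtain ⟨n', hn'M, hn'⟩ := shift_lemma r hact (t + 1) (by omega) hst M hMnorm hMtrans
        (fun k => C (j + k))
        (fun k hk => by
          have := hCarc (j + k) (by omega)
          simpa [Nat.add_assoc] using this)
      refine ⟨n' * n, mul_mem hn'M hnM, fun k hk => ?_⟩
      rw [mul_smul, hn k hk]
      have h := hn' k (by omega)
      rw [show k + j = j + k from by omega, show k + (j + 1) = j + k + 1 from by omega]
      exact h
  obtain ⟨n, hnM, hn⟩ := key t le_rfl
  refine ⟨n * n0, mul_mem hnM hn0M, fun i => ?_⟩
  rw [mul_smul]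
  have h1 : C (i : ℕ) = n0 • a i := by
    rw [hC1 (i : ℕ) (by omega)]
  rw [← h1, hn (i : ℕ) (by omega)]
  rw [hC2 ((i : ℕ) + t) (by omega) (by omega)]
  congr 1
  exact Fin.ext (by simp)
end

section
/- Let $n \geq 1$ be an integer and let $m = 2^{2n+1} + \varepsilon \cdot 2^{n+1} + 1$ where $\varepsilon \in \{1, -1\}$. Then $m$ is coprime to $6$, and there exists a prime $r$ with $r \neq 2$, $r \neq 3$, and $v_r(m) > v_r(2n+1)$, where $v_r$ denotes the $r$-adic valuation. -/
/-!
Since `2 ≡ -1 [ZMOD 3]`, the number `2^(2n+1) + 1` is divisible by `3`, so `m ≡ ±2^(n+1)` is not;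
and `m` is visibly odd. For `n ≥ 1` we have `m ≥ 2^(n+1)(2^n - 1) + 1 > 2n + 1`, so `m ∤ 2n + 1`,
which means that some prime `r` occurs in `m` to a higher power than in `2n + 1`. As `r ∣ m` and
`m` is coprime to `6`, `r ∉ {2, 3}`.
-/

/-- `q + ε √(2q) + 1` for `q = 2^(2n+1)`: with `ε = ±1`, the order of the cyclic factors of the
torus `C²_{q ± √(2q) + 1}` of `²F₄(q)`. -/
def suzukiTorusOrder (n : ℕ) (ε : ℤ) : ℤ :=
  2 ^ (2 * n + 1) + ε * 2 ^ (n + 1) + 1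

theorem odd_suzukiTorusOrder (n : ℕ) (ε : ℤ) : Odd (suzukiTorusOrder n ε) :=
  ⟨2 ^ (2 * n) + ε * 2 ^ n, by unfold suzukiTorusOrder; ring⟩

theorem three_not_dvd_suzukiTorusOrder (n : ℕ) {ε : ℤ} (hε : ¬ (3 : ℤ) ∣ ε) :
    ¬ (3 : ℤ) ∣ suzukiTorusOrder n ε := by
  intro h
  have h_odd : (3 : ℤ) ∣ 2 ^ (2 * n + 1) + 1 := by
    simpa using Odd.add_dvd_pow_add_pow (2 : ℤ) 1 (odd_two_mul_add_one n)
  have h_mid : (3 : ℤ) ∣ ε * 2 ^ (n + 1) := by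
    have := dvd_sub h h_odd
    rwa [suzukiTorusOrder, add_right_comm, add_sub_cancel_left] at this
  rcases Int.prime_three.dvd_or_dvd h_mid with h_ε | h_pow
  · exact hε h_ε
  · have : (3 : ℤ) ∣ 2 := Int.prime_three.dvd_of_dvd_pow h_pow
    norm_num at this

theorem two_mul_add_one_lt_suzukiTorusOrder {n : ℕ} (hn : 1 ≤ n) {ε : ℤ} (hε : -1 ≤ ε) :
    2 * n + 1 < suzukiTorusOrder n ε := by
  have h_lin : (2 * n + 2 : ℤ) ≤ 2 ^ (n + 1) := by
    have : (n : ℤ) < 2 ^ n := by exact_mod_cast Nat.lt_two_pow_self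
    rw [pow_succ]
    linarith
  have h_sq : (2 : ℤ) * 2 ^ (n + 1) ≤ 2 ^ (2 * n + 1) := by
    rw [← pow_succ']
    exact pow_le_pow_right₀ (by norm_num) (by omega)
  have h_pos : (0 : ℤ) < 2 ^ (n + 1) := by positivity
  unfold suzukiTorusOrder
  nlinarith

theorem Nat.coprime_six_iff {m : ℕ} : m.Coprime 6 ↔ ¬ 2 ∣ m ∧ ¬ 3 ∣ m := by
  rw [show 6 = 2 * 3 from rfl, Nat.coprime_mul_iff_right, Nat.coprime_comm,
    Nat.prime_two.coprime_iff_not_dvd, Nat.coprime_comm, Nat.prime_three.coprime_iff_not_dvd]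

theorem Nat.exists_prime_factorization_lt_of_not_dvd {a m : ℕ} (ha : a ≠ 0) (hm : m ≠ 0)
    (h : ¬ m ∣ a) : ∃ r, r.Prime ∧ r ∣ m ∧ a.factorization r < m.factorization r := by
  rw [← Nat.factorization_le_iff_dvd hm ha, Finsupp.le_def] at h
  simp only [not_forall, not_le] at h
  obtain ⟨r, hr⟩ := h
  have h_ne : m.factorization r ≠ 0 := by omega
  have h_prime : r.Prime := by
    by_contra h_np
    exact h_ne (Nat.factorization_eq_zero_of_not_prime m h_np)
  exact ⟨r, h_prime, Nat.dvd_of_factorization_pos h_ne, hr⟩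

/-- For `m = 2^(2n+1) ± 2^(n+1) + 1` (with `n ≥ 1`), `m` is coprime to `6` and there
is a prime `r ∉ {2,3}` with `v_r(m) > v_r(2n+1)`. -/
theorem suzuki_torus_order_arith (n : ℕ) (hn : 1 ≤ n) (ε : ℤ)
    (hε : ε = 1 ∨ ε = -1) (m : ℕ)
    (hm : (m : ℤ) = 2 ^ (2 * n + 1) + ε * 2 ^ (n + 1) + 1) :
    Nat.Coprime m 6 ∧
      ∃ r : ℕ, r.Prime ∧ r ≠ 2 ∧ r ≠ 3 ∧
        (2 * n + 1).factorization r < m.factorization r := by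
  change (m : ℤ) = suzukiTorusOrder n ε at hm
  have h2 : ¬ 2 ∣ m := by
    have := odd_suzukiTorusOrder n ε
    rw [← hm, Int.odd_coe_nat] at this
    exact this.not_two_dvd_nat
  have h3 : ¬ 3 ∣ m := by
    have := three_not_dvd_suzukiTorusOrder n (ε := ε) (by rcases hε with rfl | rfl <;> norm_num)
    rw [← hm] at this
    exact_mod_cast this
  have hlt : 2 * n + 1 < m := by
    have := two_mul_add_one_lt_suzukiTorusOrder hn (ε := ε) (by rcases hε with rfl | rfl <;> norm_num)
    rw [← hm] at this
    exact_mod_cast this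
  obtain ⟨r, hr, hrm, hlt_r⟩ := Nat.exists_prime_factorization_lt_of_not_dvd
    (by omega) (by omega) (Nat.not_dvd_of_pos_of_lt (by omega) hlt)
  exact ⟨Nat.coprime_six_iff.mpr ⟨h2, h3⟩, r, hr, by rintro rfl; exact h2 hrm,
    by rintro rfl; exact h3 hrm, hlt_r⟩
end

section
/- Let $n \geq 1$ be an integer, let $q = 2^{2n+1}$, and let $m = q^2 + q + 1 + \varepsilon \cdot 2^{n+1}(q+1)$ where $\varepsilon \in \{1, -1\}$. Then $m$ is odd, $m \equiv 1 \pmod{3}$, and there exists a prime $r$ with $r \neq 2$, $r \neq 3$, and $v_r(m) > v_r(2n+1)$, where $v_r$ denotes the $r$-adic valuation. -/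
/-!
Write `q = 2^(2n+1)` and `t = 2^(n+1)`, so that `m - 1 = (q + 1)(q + εt)`. Here `3 ∣ q + 1`
because `2 ≡ -1 (mod 3)` and the exponent is odd, while `q + εt` is even; hence `m ≡ 1 (mod 6)`.
Moreover `q + εt ≥ q - t > 0` for `n ≥ 1`, so `m > q > 2n + 1` and `m` cannot divide `2n + 1`.
Comparing factorizations, some prime `r` has `v_r(m) > v_r(2n+1)`, and `r ∉ {2, 3}` since `m`
is prime to `6`.
-/

/-- The order `q² + q + 1 + ε √(2q) (q + 1)` of the cyclic torus of `²F₄(q)`, `q = 2^(2n+1)`. -/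
def reeTorusOrder (n : ℕ) (ε : ℤ) : ℤ :=
  (2 ^ (2 * n + 1)) ^ 2 + 2 ^ (2 * n + 1) + 1 + ε * 2 ^ (n + 1) * (2 ^ (2 * n + 1) + 1)

lemma reeTorusOrder_sub_one (n : ℕ) (ε : ℤ) :
    reeTorusOrder n ε - 1 = (2 ^ (2 * n + 1) + 1) * (2 ^ (2 * n + 1) + ε * 2 ^ (n + 1)) := by
  unfold reeTorusOrder
  ring

lemma six_dvd_reeTorusOrder_sub_one (n : ℕ) (ε : ℤ) : (6 : ℤ) ∣ reeTorusOrder n ε - 1 := by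
  have h3 : (3 : ℤ) ∣ 2 ^ (2 * n + 1) + 1 := by
    simpa using Odd.add_dvd_pow_add_pow (2 : ℤ) 1 (odd_two_mul_add_one n)
  have h2 : (2 : ℤ) ∣ 2 ^ (2 * n + 1) + ε * 2 ^ (n + 1) :=
    dvd_add (dvd_pow_self 2 (by omega)) (dvd_mul_of_dvd_right (dvd_pow_self 2 (by omega)) ε)
  rw [reeTorusOrder_sub_one]
  exact mul_dvd_mul h3 h2

lemma two_pow_lt_reeTorusOrder {n : ℕ} (hn : 1 ≤ n) {ε : ℤ} (hε : ε = 1 ∨ ε = -1) :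
    (2 : ℤ) ^ (2 * n + 1) < reeTorusOrder n ε := by
  have htq : (2 : ℤ) ^ (n + 1) < 2 ^ (2 * n + 1) := pow_lt_pow_right₀ (by norm_num) (by omega)
  have hfactor : 1 ≤ 2 ^ (2 * n + 1) + ε * 2 ^ (n + 1) := by
    rcases hε with rfl | rfl <;> linarith [pow_pos (two_pos : (0 : ℤ) < 2) (n + 1)]
  have hq : (0 : ℤ) < 2 ^ (2 * n + 1) := by positivity
  nlinarith [reeTorusOrder_sub_one n ε]

theorem Nat.exists_prime_factorization_lt_of_not_dvd_s12 {a b : ℕ} (ha : a ≠ 0) (hb : b ≠ 0)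
    (h : ¬a ∣ b) : ∃ p, p.Prime ∧ b.factorization p < a.factorization p := by
  by_contra! hle
  exact h ((Nat.factorization_prime_le_iff_dvd ha hb).mp hle)

/-- For `q = 2^(2n+1)` and `m = q² + q + 1 ± 2^(n+1)(q+1)` (with `n ≥ 1`),
`m` is odd, `m ≡ 1 (mod 3)`, and there is a prime `r ∉ {2,3}` with
`v_r(m) > v_r(2n+1)`. -/
theorem ree_torus_order_arith (n : ℕ) (hn : 1 ≤ n) (q : ℕ) (hq : q = 2 ^ (2 * n + 1))
    (ε : ℤ) (hε : ε = 1 ∨ ε = -1) (m : ℕ)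
    (hm : (m : ℤ) = (q : ℤ) ^ 2 + q + 1 + ε * 2 ^ (n + 1) * ((q : ℤ) + 1)) :
    Odd m ∧ m % 3 = 1 ∧
      ∃ r : ℕ, r.Prime ∧ r ≠ 2 ∧ r ≠ 3 ∧
        (2 * n + 1).factorization r < m.factorization r := by
  subst hq
  replace hm : (m : ℤ) = reeTorusOrder n ε := by rw [hm]; push_cast; rfl
  have hmod : m % 6 = 1 := by
    have := six_dvd_reeTorusOrder_sub_one n ε
    omega
  have hlt : 2 * n + 1 < m := by
    have h := two_pow_lt_reeTorusOrder hn hε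
    rw [← hm] at h
    exact Nat.lt_two_pow_self.trans (by exact_mod_cast h)
  obtain ⟨r, hr, hvr⟩ := Nat.exists_prime_factorization_lt_of_not_dvd_s12 (a := m) (by omega)
    (by omega) (Nat.not_dvd_of_pos_of_lt (by omega) hlt)
  refine ⟨Nat.odd_iff.mpr (by omega), by omega, r, hr, ?_, ?_, hvr⟩ <;> rintro rfl <;>
    rw [Nat.factorization_eq_zero_of_not_dvd (n := m) (by omega)] at hvr <;>
    exact Nat.not_lt_zero _ hvr
end

section
/- Let $\mathit{\Gamma}$ be a digraph with at least one arc, and let $H$ be a group acting on $\mathit{\Gamma}$ by automorphisms such that $H$ acts primitively on the vertex set and transitively on the set of arcs. If some vertex has at most $2$ out-neighbours, then $\mathit{\Gamma}$ is a directed cycle of prime length; that is, the number of vertices is a prime $p$, every vertex has exactly one out-neighbour, and there is a permutation $\sigma$ of the vertex set such that $u \to w$ if and only if $w = \sigma(u)$, and the cyclic group generated by $\sigma$ is transitive on the vertex set. -/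
/-- A group action is primitive (preprimitive) if it is transitive and every
invariant equivalence relation on the set is trivial. -/
def IsPrimitiveAction (H V : Type*) [Group H] [MulAction H V] : Prop :=
  (∀ u w : V, ∃ h : H, h • u = w) ∧
    ∀ e : Setoid V, (∀ (h : H) (u w : V), e.r u w → e.r (h • u) (h • w)) →
      (∀ u w : V, e.r u w) ∨ (∀ u w : V, e.r u w → u = w)

/-- A vertex-primitive arc-transitive digraph in which some vertex has at most two
out-neighbours is a directed cycle of prime length. -/
theorem vertex_primitive_small_valency_is_prime_cycle {V H : Type*} [Fintype V]
    [Group H] [MulAction H V] [FaithfulSMul H V]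
    (r : V → V → Prop) (hirr : Irreflexive r) (hanti : ∀ u w, r u w → ¬ r w u)
    (hact : ∀ (h : H) (u w : V), r u w → r (h • u) (h • w))
    (harc : ∃ u w : V, r u w)
    (hprim : IsPrimitiveAction H V)
    (hat : ∀ u w u' w' : V, r u w → r u' w' →
      ∃ h : H, h • u = u' ∧ h • w = w')
    (hsmall : ∃ v : V, Nat.card {w : V // r v w} ≤ 2) :
    (Nat.card V).Prime ∧ (∀ v : V, ∃! w : V, r v w) ∧
      ∃ σ : Equiv.Perm V, (∀ u w : V, r u w ↔ w = σ u) ∧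
        ∀ u w : V, ∃ k : ℤ, (σ ^ k) u = w := by
  classical
  obtain ⟨htrans, hsetoid⟩ := hprim
  obtain ⟨u₀, w₀, harc₀⟩ := harc
  have hact' : ∀ (h : H) (u w : V), r (h • u) (h • w) → r u w := by
    intro h u w hr
    have := hact h⁻¹ _ _ hr
    simpa using this
  set od : V → ℕ := fun v => (Finset.univ.filter (fun w => r v w)).card with hod
  set idg : V → ℕ := fun v => (Finset.univ.filter (fun u => r u v)).card with hid
  have hodconst : ∀ u v, od u = od v := by
    intro u v
    obtain ⟨h, hh⟩ := htrans u v
    apply Finset.card_bij (fun w _ => h • w)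
    · intro w hw
      simp only [Finset.mem_filter, Finset.mem_univ, true_and] at hw ⊢
      rw [← hh]; exact hact h _ _ hw
    · intro w₁ h₁ w₂ h₂ he
      exact MulAction.injective h he
    · intro w hw
      simp only [Finset.mem_filter, Finset.mem_univ, true_and] at hw
      refine ⟨h⁻¹ • w, ?_, by simp⟩
      simp only [Finset.mem_filter, Finset.mem_univ, true_and]
      have := hact h⁻¹ _ _ hw
      rwa [← hh, inv_smul_smul] at this
  have hidconst : ∀ u v, idg u = idg v := by
    intro u v
    obtain ⟨h, hh⟩ := htrans u v
    apply Finset.card_bij (fun w _ => h • w)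
    · intro w hw
      simp only [Finset.mem_filter, Finset.mem_univ, true_and] at hw ⊢
      rw [← hh]; exact hact h _ _ hw
    · intro w₁ h₁ w₂ h₂ he
      exact MulAction.injective h he
    · intro w hw
      simp only [Finset.mem_filter, Finset.mem_univ, true_and] at hw
      refine ⟨h⁻¹ • w, ?_, by simp⟩
      simp only [Finset.mem_filter, Finset.mem_univ, true_and]
      have := hact h⁻¹ _ _ hw
      rwa [← hh, inv_smul_smul] at this
  have hsum : ∑ v, od v = ∑ v, idg v := by
    simp only [hod, hid, Finset.card_filter]
    exact Finset.sum_comm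
  have hio : ∀ v, idg v = od v := by
    intro v
    have h1 : ∑ u, od u = Fintype.card V * od v := by
      rw [Finset.sum_congr rfl (fun u _ => hodconst u v)]
      simp [Finset.card_univ, mul_comm]
    have h2 : ∑ u, idg u = Fintype.card V * idg v := by
      rw [Finset.sum_congr rfl (fun u _ => hidconst u v)]
      simp [Finset.card_univ, mul_comm]
    have hpos : 0 < Fintype.card V := @Fintype.card_pos V _ ⟨u₀⟩
    have := h2 ▸ h1 ▸ hsum
    exact (Nat.eq_of_mul_eq_mul_left hpos this.symm)
  have hod_card : ∀ v, Nat.card {w : V // r v w} = od v := by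
    intro v
    rw [Nat.card_eq_fintype_card, Fintype.card_subtype]
  have hd12 : od u₀ = 1 ∨ od u₀ = 2 := by
    obtain ⟨v₁, hv₁⟩ := hsmall
    rw [hod_card] at hv₁
    have hle : od u₀ ≤ 2 := (hodconst u₀ v₁) ▸ hv₁
    have hge : 1 ≤ od u₀ := by
      have : w₀ ∈ Finset.univ.filter (fun w => r u₀ w) := by
        simp [harc₀]
      calc 1 ≤ ({w₀} : Finset V).card := by simp
        _ ≤ _ := Finset.card_le_card (by simp [harc₀])
    omega
  -- injectivity of out-neighbourhoods via primitivity
  have hGinj : ∀ u w : V, (∀ z, r u z ↔ r w z) → u = w := by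
    intro u w huw
    set e : Setoid V := ⟨fun u w => ∀ z, r u z ↔ r w z,
      ⟨fun _ _ => Iff.rfl, fun h z => (h z).symm, fun h1 h2 z => (h1 z).trans (h2 z)⟩⟩ with he
    rcases hsetoid e (by
      intro h u w hr z
      constructor
      · intro hh
        have h1 := hact h⁻¹ _ _ hh
        rw [inv_smul_smul] at h1
        have h2 := (hr _).1 h1
        have := hact h _ _ h2
        rwa [smul_inv_smul] at this
      · intro hh
        have h1 := hact h⁻¹ _ _ hh
        rw [inv_smul_smul] at h1
        have h2 := (hr _).2 h1
        have := hact h _ _ h2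
        rwa [smul_inv_smul] at this) with htot | htriv
    · exfalso
      have h1 : ∀ u : V, r u w₀ := fun u => (htot u u₀ w₀).2 harc₀
      exact hirr w₀ (h1 w₀)
    · exact htriv u w huw
  rcases hd12 with hcase | hcase
  · -- valency 1 : the digraph is a directed cycle of prime length
    have hd1 : ∀ v, od v = 1 := fun v => (hodconst v u₀).trans hcase
    have hi1 : ∀ v, idg v = 1 := fun v => (hio v).trans (hd1 v)
    have huniq : ∀ v : V, ∃! w : V, r v w := by
      intro v
      have := hd1 v
      rw [hod, Finset.card_eq_one] at this
      obtain ⟨a, ha⟩ := this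
      refine ⟨a, ?_, ?_⟩
      · have : a ∈ Finset.univ.filter (fun w => r v w) := by rw [ha]; simp
        simpa using this
      · intro y hy
        have : y ∈ Finset.univ.filter (fun w => r v w) := by simpa using hy
        rw [ha] at this; simpa using this
    have hinuniq : ∀ v : V, ∃! u : V, r u v := by
      intro v
      have := hi1 v
      rw [hid, Finset.card_eq_one] at this
      obtain ⟨a, ha⟩ := this
      refine ⟨a, ?_, ?_⟩
      · have : a ∈ Finset.univ.filter (fun u => r u v) := by rw [ha]; simp
        simpa using this
      · intro y hy
        have : y ∈ Finset.univ.filter (fun u => r u v) := by simpa using hy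
        rw [ha] at this; simpa using this
    choose f hf hf' using huniq
    have finj : Function.Injective f := by
      intro u w he
      obtain ⟨c, hc, hcu⟩ := hinuniq (f u)
      have h1 : u = c := hcu u (hf u)
      have h2 : w = c := hcu w (by rw [he]; exact hf w)
      rw [h1, h2]
    have fbij : Function.Bijective f := Finite.injective_iff_bijective.mp finj
    set σ : Equiv.Perm V := Equiv.ofBijective f fbij with hσ
    have hσapp : ∀ u, σ u = f u := fun u => rfl
    have hcomm : ∀ (h : H) (u : V), h • (σ u) = σ (h • u) := by
      intro h u
      have h1 : r (h • u) (h • f u) := hact h _ _ (hf u)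
      have := hf' (h • u) _ h1
      rw [hσapp, hσapp, this]
    have hcommP : ∀ (h : H), Commute (MulAction.toPerm h : Equiv.Perm V) σ := by
      intro h
      apply Equiv.ext
      intro u
      simp only [Equiv.Perm.mul_apply, MulAction.toPerm_apply]
      exact hcomm h u
    have hcommz : ∀ (h : H) (i : ℤ) (u : V), h • ((σ ^ i) u) = (σ ^ i) (h • u) := by
      intro h i u
      have := (hcommP h).zpow_right i
      have h2 := congrArg (fun (π : Equiv.Perm V) => π u) this
      simpa [Equiv.Perm.mul_apply] using h2
    -- transitivity of ⟨σ⟩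
    have htot : ∀ u w : V, ∃ k : ℤ, (σ ^ k) u = w := by
      set e : Setoid V := ⟨fun u w => ∃ k : ℤ, (σ ^ k) u = w,
        ⟨fun u => ⟨0, rfl⟩,
         by rintro u w ⟨k, rfl⟩
            exact ⟨-k, by simp [← Equiv.Perm.mul_apply, ← zpow_add]⟩,
         by rintro u w z ⟨k, rfl⟩ ⟨l, rfl⟩
            exact ⟨k + l, by simp [← Equiv.Perm.mul_apply, ← zpow_add, add_comm]⟩⟩⟩ with he
      rcases hsetoid e (by
        rintro h u w ⟨k, rfl⟩
        exact ⟨k, (hcommz h k u).symm⟩) with htot | htriv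
      · exact htot
      · exfalso
        have h1 : (σ : Equiv.Perm V) u₀ = u₀ := by
          have := htriv u₀ (σ u₀) ⟨1, by simp⟩
          exact this.symm
        have := hf u₀
        rw [← hσapp, h1] at this
        exact hirr u₀ this
    -- freeness
    have hfree : ∀ (i : ℤ) (u : V), (σ ^ i) u = u → σ ^ i = 1 := by
      intro i u hu
      apply Equiv.ext
      intro w
      obtain ⟨k, rfl⟩ := htot u w
      have : (σ ^ i) ((σ ^ k) u) = (σ ^ k) ((σ ^ i) u) := by
        simp [← Equiv.Perm.mul_apply, ← zpow_add, add_comm]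
      rw [this, hu]; rfl
    have hNpos : 0 < orderOf σ := by
      have : Finite (Equiv.Perm V) := by infer_instance
      exact orderOf_pos σ
    set N := orderOf σ with hN
    have hkey : ∀ a b : ℕ, a ≤ b → (σ ^ a) u₀ = (σ ^ b) u₀ → N ∣ (b - a) := by
      intro a b hab heq
      have h2 : (σ ^ (b - a)) ((σ ^ a) u₀) = (σ ^ b) u₀ := by
        rw [← Equiv.Perm.mul_apply, ← pow_add]
        congr 2
        omega
      rw [← heq] at h2
      have h3 : σ ^ (b - a) = 1 := by
        have := hfree ((b - a : ℕ) : ℤ) ((σ ^ a) u₀) (by rw [zpow_natCast]; exact h2)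
        rwa [zpow_natCast] at this
      exact orderOf_dvd_of_pow_eq_one h3
    have hcardN : Fintype.card V = N := by
      have hbij : Function.Bijective (fun k : Fin N => (σ ^ (k : ℕ)) u₀) := by
        constructor
        · intro i j hij
          simp only at hij
          rcases le_total (i : ℕ) (j : ℕ) with hle | hle
          · have hd := hkey _ _ hle hij
            have hlt : (j : ℕ) - (i : ℕ) < N := by have := j.isLt; omega
            have := Nat.eq_zero_of_dvd_of_lt hd hlt
            exact Fin.ext (by omega)
          · have hd := hkey _ _ hle hij.symm
            have hlt : (i : ℕ) - (j : ℕ) < N := by have := i.isLt; omega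
            have := Nat.eq_zero_of_dvd_of_lt hd hlt
            exact Fin.ext (by omega)
        · intro w
          obtain ⟨k, hk⟩ := htot u₀ w
          have hmod : (σ ^ (k % (N : ℤ))) u₀ = w := by
            have hdvd : σ ^ ((N : ℤ) * (k / (N : ℤ))) = 1 := by
              rw [zpow_mul, zpow_natCast, pow_orderOf_eq_one, one_zpow]
            have heq : σ ^ k = σ ^ (k % (N : ℤ)) := by
              conv_lhs => rw [← Int.emod_add_mul_ediv k (N : ℤ)]
              rw [zpow_add, hdvd, mul_one]
            rw [← heq]; exact hk
          have h0 : 0 ≤ k % (N : ℤ) := Int.emod_nonneg k (by exact_mod_cast hNpos.ne')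
          have h1 : k % (N : ℤ) < (N : ℤ) := Int.emod_lt_of_pos k (by exact_mod_cast hNpos)
          have hlt : (k % (N : ℤ)).toNat < N := by omega
          refine ⟨⟨(k % (N : ℤ)).toNat, hlt⟩, ?_⟩
          simp only
          rw [← zpow_natCast, Int.toNat_of_nonneg h0]
          exact hmod
      have := Fintype.card_of_bijective hbij
      rw [Fintype.card_fin] at this
      exact this.symm
    have hn2 : 2 ≤ Fintype.card V := by
      have hne : u₀ ≠ w₀ := by
        rintro rfl
        exact hirr u₀ harc₀
      have : Nontrivial V := ⟨u₀, w₀, hne⟩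
      exact Fintype.one_lt_card_iff_nontrivial.mpr this
    have hprime : (Nat.card V).Prime := by
      rw [Nat.card_eq_fintype_card, Nat.prime_def_lt]
      refine ⟨hn2, ?_⟩
      intro m hmlt hmdvd
      by_contra hm1
      have hm0 : m ≠ 0 := by
        rintro rfl
        rw [Nat.zero_dvd] at hmdvd
        omega
      set e : Setoid V := ⟨fun u w => ∃ i : ℤ, ((σ ^ m) ^ i) u = w,
        ⟨fun u => ⟨0, rfl⟩,
         by rintro u w ⟨k, rfl⟩
            exact ⟨-k, by simp [← Equiv.Perm.mul_apply, ← zpow_add]⟩,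
         by rintro u w z ⟨k, rfl⟩ ⟨l, rfl⟩
            exact ⟨k + l, by simp [← Equiv.Perm.mul_apply, ← zpow_add, add_comm]⟩⟩⟩ with he
      have hinv : ∀ (h : H) (u w : V), e.r u w → e.r (h • u) (h • w) := by
        rintro h u w ⟨k, rfl⟩
        refine ⟨k, ?_⟩
        have hc := ((hcommP h).pow_right m).zpow_right k
        have h2 := congrArg (fun (π : Equiv.Perm V) => π u) hc
        simp only [Equiv.Perm.mul_apply, MulAction.toPerm_apply] at h2
        exact h2.symm
      rcases hsetoid e hinv with htotm | htrivm
      · obtain ⟨i, hi⟩ := htotm u₀ (σ u₀)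
        set t : ℤ := (m : ℤ) * i with ht
        have h1 : (σ ^ t) u₀ = σ u₀ := by
          rw [← hi]
          congr 1
          rw [← zpow_natCast σ m, ← zpow_mul]
        have h2 : (σ ^ (t - 1)) (σ u₀) = σ u₀ := by
          have hz : σ ^ (t - 1) = σ ^ t * σ⁻¹ := zpow_sub_one σ t
          rw [hz]
          simp only [Equiv.Perm.mul_apply]
          rw [show (σ⁻¹ : Equiv.Perm V) (σ u₀) = u₀ by simp]
          exact h1
        have h3 : σ ^ (t - 1) = 1 := hfree _ _ h2
        have h4 : ((N : ℤ)) ∣ (t - 1) := orderOf_dvd_iff_zpow_eq_one.mpr h3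
        have h5 : ((m : ℤ)) ∣ (t - 1) := by
          refine dvd_trans ?_ h4
          exact_mod_cast hcardN ▸ hmdvd
        have h6 : ((m : ℤ)) ∣ 1 := by
          have h7 : ((m : ℤ)) ∣ t := ht ▸ dvd_mul_right _ _
          have := dvd_sub h7 h5
          simpa using this
        have : m ∣ 1 := by exact_mod_cast h6
        exact hm1 (Nat.dvd_one.mp this)
      · have h1 : (σ ^ m) u₀ = u₀ := by
          have := htrivm u₀ ((σ ^ m) u₀) ⟨1, by rw [zpow_one]⟩
          exact this.symm
        have h2 : σ ^ m = 1 := by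
          have := hfree (m : ℤ) u₀ (by rwa [zpow_natCast])
          rwa [zpow_natCast] at this
        have h3 : N ∣ m := orderOf_dvd_of_pow_eq_one h2
        have := Nat.le_of_dvd (Nat.pos_of_ne_zero hm0) h3
        omega
    refine ⟨hprime, fun v => ⟨f v, hf v, hf' v⟩, σ, ?_, htot⟩
    intro u w
    constructor
    · intro huw
      rw [hσapp]
      exact hf' u w huw
    · rintro rfl
      rw [hσapp]
      exact hf u
  · -- valency 2 : impossible
    exfalso
    have hd2 : ∀ v, od v = 2 := fun v => (hodconst v u₀).trans hcase
    have hi2 : ∀ v, idg v = 2 := fun v => (hio v).trans (hd2 v)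
    have hout : ∀ c : V, ∃ a b : V, a ≠ b ∧ ∀ z, r c z ↔ (z = a ∨ z = b) := by
      intro c
      have h2 := hd2 c
      simp only [hod] at h2
      rw [Finset.card_eq_two] at h2
      obtain ⟨a, b, hab, hset⟩ := h2
      refine ⟨a, b, hab, ?_⟩
      intro z
      have : z ∈ Finset.univ.filter (fun w => r c w) ↔ z ∈ ({a, b} : Finset V) := by rw [hset]
      simpa using this
    have hin : ∀ u : V, ∃ c d : V, c ≠ d ∧ ∀ z, r z u ↔ (z = c ∨ z = d) := by
      intro u
      have h2 := hi2 u
      simp only [hid] at h2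
      rw [Finset.card_eq_two] at h2
      obtain ⟨c, d, hcd, hset⟩ := h2
      refine ⟨c, d, hcd, ?_⟩
      intro z
      have : z ∈ Finset.univ.filter (fun w => r w u) ↔ z ∈ ({c, d} : Finset V) := by rw [hset]
      simpa using this
    have houtp : ∀ c u : V, r c u → ∃ p, p ≠ u ∧ ∀ z, r c z ↔ (z = u ∨ z = p) := by
      intro c u hcu
      obtain ⟨a, b, hab, hchar⟩ := hout c
      rcases (hchar u).1 hcu with h | h
      · subst h
        exact ⟨b, hab.symm, hchar⟩
      · subst h
        refine ⟨a, hab, ?_⟩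
        intro z
        rw [hchar z]
        tauto
    set s : V → V → Prop := fun u w => u ≠ w ∧ ∃ v, r v u ∧ r v w with hsdef
    have hssymm : ∀ u w, s u w → s w u := by
      rintro u w ⟨hne, v, h1, h2⟩
      exact ⟨hne.symm, v, h2, h1⟩
    have hsne : ∀ u w, s u w → u ≠ w := fun u w h => h.1
    have hsinv : ∀ (h : H) (u w : V), s u w → s (h • u) (h • w) := by
      rintro h u w ⟨hne, v, h1, h2⟩
      exact ⟨fun hh => hne (MulAction.injective h hh), h • v, hact h _ _ h1, hact h _ _ h2⟩
    have hnbrs : ∀ u : V, ∃ p q : V, p ≠ q ∧ ∀ w, s u w ↔ (w = p ∨ w = q) := by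
      intro u
      obtain ⟨c, d, hcd, hchar⟩ := hin u
      have hcu : r c u := (hchar c).2 (Or.inl rfl)
      have hdu : r d u := (hchar d).2 (Or.inr rfl)
      obtain ⟨p, hpu, hpchar⟩ := houtp c u hcu
      obtain ⟨q, hqu, hqchar⟩ := houtp d u hdu
      have hpq : p ≠ q := by
        intro h
        subst h
        apply hcd
        apply hGinj
        intro z
        rw [hpchar z, hqchar z]
      refine ⟨p, q, hpq, ?_⟩
      intro w
      constructor
      · rintro ⟨hne, v, hvu, hvw⟩
        rcases (hchar v).1 hvu with h | h
        · subst h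
          rcases (hpchar w).1 hvw with h | h
          · exact absurd h.symm hne
          · exact Or.inl h
        · subst h
          rcases (hqchar w).1 hvw with h | h
          · exact absurd h.symm hne
          · exact Or.inr h
      · rintro (rfl | rfl)
        · exact ⟨Ne.symm hpu, c, hcu, (hpchar w).2 (Or.inr rfl)⟩
        · exact ⟨Ne.symm hqu, d, hdu, (hqchar w).2 (Or.inr rfl)⟩
    have hpair : ∀ w a b c : V, a ≠ b → s w a → s w b → s w c → c ≠ b → c = a := by
      intro w a b c hab ha hb hc hcb
      obtain ⟨p, q, hpq, hchar⟩ := hnbrs w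
      rcases (hchar a).1 ha with h1 | h1 <;> rcases (hchar b).1 hb with h2 | h2 <;>
        rcases (hchar c).1 hc with h3 | h3 <;>
        first
          | exact h3.trans h1.symm
          | exact absurd (h1.trans h2.symm) hab
          | exact absurd (h3.trans h2.symm) hcb
    have hconn : ∀ u w : V, Relation.EqvGen s u w := by
      set e : Setoid V := ⟨Relation.EqvGen s, Relation.EqvGen.is_equivalence s⟩ with he
      have hinv : ∀ (h : H) (u w : V), e.r u w → e.r (h • u) (h • w) := by
        intro h u w huw
        induction huw with
        | rel x y hxy => exact Relation.EqvGen.rel _ _ (hsinv h x y hxy)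
        | refl x => exact Relation.EqvGen.refl _
        | symm x y _ ih => exact Relation.EqvGen.symm _ _ ih
        | trans x y z _ _ ih1 ih2 => exact Relation.EqvGen.trans _ _ _ ih1 ih2
      rcases hsetoid e hinv with htot | htriv
      · exact htot
      · exfalso
        obtain ⟨p, q, hpq, hchar⟩ := hnbrs u₀
        have hsp : s u₀ p := (hchar p).2 (Or.inl rfl)
        exact (hsne _ _ hsp) (htriv _ _ (Relation.EqvGen.rel _ _ hsp))
    have hclosure : ∀ (T : V → Prop), (∀ u w, T u → s u w → T w) → ∀ u, T u → ∀ w, T w := by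
      intro T hstep u hTu w
      have key : ∀ a b : V, Relation.EqvGen s a b → (T a ↔ T b) := by
        intro a b hab
        induction hab with
        | rel x y hxy => exact ⟨fun hx => hstep _ _ hx hxy, fun hy => hstep _ _ hy (hssymm _ _ hxy)⟩
        | refl x => exact Iff.rfl
        | symm x y _ ih => exact ih.symm
        | trans x y z _ _ ih1 ih2 => exact ih1.trans ih2
      exact (key u w (hconn u w)).1 hTu
    have hfix2 : ∀ (g : H) (w u z : V), g • w = w → g • u = u → s w u → s w z → g • z = z := by
      intro g w u z hgw hgu hwu hwz
      by_cases hzu : z = u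
      · rw [hzu]; exact hgu
      have h1 : s w (g • z) := by
        have := hsinv g w z hwz
        rwa [hgw] at this
      have hgzu : g • z ≠ u := by
        intro hh
        exact hzu (MulAction.injective g (hh.trans hgu.symm))
      exact hpair w z u (g • z) hzu hwz hwu h1 hgzu
    have hrigid : ∀ (g : H) (v x : V), s v x → g • v = v → g • x = x → ∀ u : V, g • u = u := by
      intro g v x hsvx hgv hgx
      have hstep : ∀ u w, (g • u = u ∧ ∀ z, s u z → g • z = z) → s u w →
          (g • w = w ∧ ∀ z, s w z → g • z = z) := by
        rintro u w ⟨hgu, hnb⟩ hsuw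
        have hgw := hnb w hsuw
        exact ⟨hgw, fun z hz => hfix2 g w u z hgw hgu (hssymm _ _ hsuw) hz⟩
      have hbase : g • v = v ∧ ∀ z, s v z → g • z = z :=
        ⟨hgv, fun w hw => hfix2 g v x w hgv hgx hsvx hw⟩
      intro u
      exact (hclosure _ hstep v hbase u).1
    have hrigid2 : ∀ (g₁ g₂ : H) (v x : V), s v x → g₁ • v = g₂ • v → g₁ • x = g₂ • x →
        ∀ u : V, g₁ • u = g₂ • u := by
      intro g₁ g₂ v x hsvx h1 h2 u
      have hv : (g₂⁻¹ * g₁) • v = v := by rw [mul_smul, h1, inv_smul_smul]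
      have hx : (g₂⁻¹ * g₁) • x = x := by rw [mul_smul, h2, inv_smul_smul]
      have h3 := hrigid _ v x hsvx hv hx u
      rw [mul_smul] at h3
      calc g₁ • u = g₂ • (g₂⁻¹ • (g₁ • u)) := by rw [smul_inv_smul]
        _ = g₂ • u := by rw [h3]
    obtain ⟨a, b, hab, hvchar⟩ := hout u₀
    have hva : r u₀ a := (hvchar a).2 (Or.inl rfl)
    have hvb : r u₀ b := (hvchar b).2 (Or.inr rfl)
    obtain ⟨h₀, hh₀v, hh₀a⟩ := hat u₀ a u₀ b hva hvb
    have hh₀b : h₀ • b = a := by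
      have h1 : r u₀ (h₀ • b) := by
        have := hact h₀ _ _ hvb
        rwa [hh₀v] at this
      rcases (hvchar _).1 h1 with h | h
      · exact h
      · exact absurd (MulAction.injective h₀ (hh₀a.trans h.symm)) hab
    obtain ⟨x, y, hxy, hvnbr⟩ := hnbrs u₀
    have hsvx : s u₀ x := (hvnbr x).2 (Or.inl rfl)
    have hsvy : s u₀ y := (hvnbr y).2 (Or.inr rfl)
    have hh₀x : h₀ • x = y := by
      have h1 : s u₀ (h₀ • x) := by
        have := hsinv h₀ _ _ hsvx
        rwa [hh₀v] at this
      rcases (hvnbr _).1 h1 with h | h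
      · exfalso
        have hA := hrigid h₀ u₀ x hsvx hh₀v h a
        rw [hh₀a] at hA
        exact hab hA.symm
      · exact h
    have hh₀y : h₀ • y = x := by
      have h1 : s u₀ (h₀ • y) := by
        have := hsinv h₀ _ _ hsvy
        rwa [hh₀v] at this
      rcases (hvnbr _).1 h1 with h | h
      · exact h
      · exact absurd (MulAction.injective h₀ (hh₀x.trans h.symm)) hxy
    have hσ₀ex : ∃ g : H, g • u₀ = x ∧ g • x ≠ u₀ := by
      obtain ⟨g, hg⟩ := htrans u₀ x
      by_cases hgx : g • x = u₀
      · refine ⟨g * h₀, by rw [mul_smul, hh₀v, hg], ?_⟩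
        rw [mul_smul, hh₀x]
        intro hh
        exact hxy (MulAction.injective g (hgx.trans hh.symm))
      · exact ⟨g, hg, hgx⟩
    obtain ⟨σ₀, hσ₀v, hσ₀x⟩ := hσ₀ex
    set P : V → Prop := fun u => s u (σ₀ • u) ∧ σ₀ • σ₀ • u ≠ u with hP
    have hbase : P u₀ := by
      constructor
      · rw [hσ₀v]; exact hsvx
      · rw [hσ₀v]; exact hσ₀x
    have hstep : ∀ u w, P u → s u w → P w := by
      rintro u w ⟨h1, h2⟩ hsw
      by_cases hw : w = σ₀ • u
      · subst hw
        constructor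
        · exact hsinv σ₀ _ _ h1
        · intro hh
          exact h2 (MulAction.injective σ₀ hh)
      · have hswu : s (σ₀ • u) u := hssymm _ _ h1
        have hs2 : s (σ₀ • u) (σ₀ • σ₀ • u) := hsinv σ₀ _ _ h1
        have hs3 : s (σ₀ • u) (σ₀ • w) := hsinv σ₀ _ _ hsw
        have hne : u ≠ σ₀ • σ₀ • u := fun hh => h2 hh.symm
        have hne2 : σ₀ • w ≠ σ₀ • σ₀ • u := fun hh => hw (MulAction.injective σ₀ hh)
        have hσw : σ₀ • w = u := hpair (σ₀ • u) u (σ₀ • σ₀ • u) (σ₀ • w) hne hswu hs2 hs3 hne2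
        constructor
        · rw [hσw]; exact hssymm _ _ hsw
        · rw [hσw]
          exact fun hh => hw hh.symm
    have hshift : ∀ u : V, P u := fun u => hclosure P hstep u₀ hbase u
    have hs_fwd : ∀ u : V, s u (σ₀ • u) := fun u => (hshift u).1
    have hs_bwd : ∀ u : V, s u (σ₀⁻¹ • u) := by
      intro u
      have h1 := hs_fwd (σ₀⁻¹ • u)
      rw [smul_inv_smul] at h1
      exact hssymm _ _ h1
    have hne_fb : ∀ u : V, σ₀ • u ≠ σ₀⁻¹ • u := by
      intro u hh
      have h2 := (hshift (σ₀⁻¹ • u)).2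
      rw [smul_inv_smul] at h2
      exact h2 hh
    have hnbr_iff : ∀ u w : V, s u w ↔ (w = σ₀ • u ∨ w = σ₀⁻¹ • u) := by
      intro u w
      constructor
      · intro hsw
        obtain ⟨p, q, hpq, hchar⟩ := hnbrs u
        rcases (hchar (σ₀ • u)).1 (hs_fwd u) with e1 | e1 <;>
          rcases (hchar (σ₀⁻¹ • u)).1 (hs_bwd u) with e2 | e2 <;>
          rcases (hchar w).1 hsw with e3 | e3 <;>
          first
            | exact Or.inl (e3.trans e1.symm)
            | exact Or.inr (e3.trans e2.symm)
            | exact absurd (e1.trans e2.symm) (hne_fb u)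
      · rintro (rfl | rfl)
        · exact hs_fwd u
        · exact hs_bwd u
    have horbit : ∀ u w : V, ∃ i : ℤ, (σ₀ ^ i) • u = w := by
      intro u w
      have key : ∀ a b : V, Relation.EqvGen s a b → ∃ i : ℤ, (σ₀ ^ i) • a = b := by
        intro a b hab
        induction hab with
        | rel p q hxy =>
          rcases (hnbr_iff p q).1 hxy with h | h
          · exact ⟨1, by rw [zpow_one, h]⟩
          · exact ⟨-1, by rw [h]; simp⟩
        | refl p => exact ⟨0, by simp⟩
        | symm p q _ ih =>
          obtain ⟨i, hi⟩ := ih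
          exact ⟨-i, by rw [← hi, smul_smul, ← zpow_add]; simp⟩
        | trans p q z _ _ ih1 ih2 =>
          obtain ⟨i, hi⟩ := ih1
          obtain ⟨j, hj⟩ := ih2
          exact ⟨j + i, by rw [← hj, ← hi, smul_smul, ← zpow_add]⟩
      exact key u w (hconn u w)
    have hy_eq : y = σ₀⁻¹ • u₀ := by
      rcases (hnbr_iff u₀ y).1 hsvy with h | h
      · exact absurd (h.trans hσ₀v).symm hxy
      · exact h
    have hh₀sq : ∀ u : V, h₀ • h₀ • u = u := by
      intro u
      have hv2 : (h₀ * h₀) • u₀ = u₀ := by rw [mul_smul, hh₀v, hh₀v]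
      have hx2 : (h₀ * h₀) • x = x := by rw [mul_smul, hh₀x, hh₀y]
      have h3 := hrigid (h₀ * h₀) u₀ x hsvx hv2 hx2 u
      rwa [mul_smul] at h3
    have hconj : ∀ u : V, (h₀ * σ₀ * h₀) • u = σ₀⁻¹ • u := by
      refine hrigid2 (h₀ * σ₀ * h₀) σ₀⁻¹ u₀ y hsvy ?_ ?_
      · rw [mul_smul, mul_smul, hh₀v, hσ₀v, hh₀x, hy_eq]
      · have h1 : s x (σ₀ • x) := hs_fwd x
        have h2 : s y (h₀ • (σ₀ • x)) := by
          have := hsinv h₀ _ _ h1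
          rwa [hh₀x] at this
        have h3 : h₀ • (σ₀ • x) ≠ u₀ := by
          intro hh
          have h4 : h₀ • (h₀ • (σ₀ • x)) = h₀ • u₀ := by rw [hh]
          rw [hh₀sq, hh₀v] at h4
          exact hσ₀x h4
        have hσy : σ₀ • y = u₀ := by rw [hy_eq, smul_inv_smul]
        rcases (hnbr_iff y _).1 h2 with h | h
        · exact absurd (h.trans hσy) h3
        · rw [mul_smul, mul_smul, hh₀y]
          exact h
    have hconjG : h₀ * σ₀ * h₀ = σ₀⁻¹ := eq_of_smul_eq_smul hconj
    have hsqG : h₀ * h₀ = 1 := eq_of_smul_eq_smul (fun u : V => by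
      rw [mul_smul, hh₀sq u, one_smul])
    have hinvh : h₀⁻¹ = h₀ := inv_eq_of_mul_eq_one_right hsqG
    obtain ⟨k, hk⟩ := horbit u₀ a
    have hconjk : h₀ * σ₀ ^ k * h₀ = σ₀ ^ (-k) := by
      have h1 : (MulAut.conj h₀) (σ₀ ^ k) = ((MulAut.conj h₀) σ₀) ^ k := map_zpow _ _ _
      have h2 : (MulAut.conj h₀) σ₀ = σ₀⁻¹ := by
        show h₀ * σ₀ * h₀⁻¹ = σ₀⁻¹
        rw [hinvh]
        exact hconjG
      rw [h2] at h1
      have h3 : (MulAut.conj h₀) (σ₀ ^ k) = h₀ * σ₀ ^ k * h₀⁻¹ := rfl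
      rw [h3, hinvh] at h1
      rw [h1, inv_zpow, zpow_neg]
    have hb_eq : b = (σ₀ ^ (-k)) • u₀ := by
      rw [← hconjk, mul_smul, mul_smul, hh₀v, hk]
      exact hh₀a.symm
    have hrva : r u₀ ((σ₀ ^ k) • u₀) := by rw [hk]; exact hva
    have hrvb : r u₀ ((σ₀ ^ (-k)) • u₀) := by rw [← hb_eq]; exact hvb
    have hr2 : r ((σ₀ ^ k) • u₀) u₀ := by
      have h5 := hact (σ₀ ^ k) _ _ hrvb
      rwa [smul_smul, ← zpow_add, add_neg_cancel, zpow_zero, one_smul] at h5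
    exact hanti _ _ hrva hr2
end
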